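/- arXiv:1708.06479 — 9 statements merged into one kernel-verified Lean document; each statement's English description precedes it below -/
import Mathlib

section
/- Let b ≥ 2 be an integer, let p ≥ 1 be an integer, let α > 1 be real, and let z ≥ 0 be real. Then ∑_{n=1}^{b^p−1} s_b(n)·((z+n)^{−α} − (z+n+1)^{−α}) = ∑_{l=0}^{p−1} b^{−αl}·[ζ(α, 1 + z/b^l) − ζ(α, 1 + (z+b^p)/b^l)] − ∑_{l=1}^{p} b·b^{−αl}·[ζ(α, 1 + z/b^l) − ζ(α, 1 + (z+b^p)/b^l)]. -/
/-! Write `F n = (z + n)^(-α)` and `N = b^p`. For `n < N` the `l`-th digit of `n` is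
`⌊n/b^l⌋ - b⌊n/b^(l+1)⌋`, so the left side is `∑_{l<p} (A (b^l) - b A (b^(l+1)))` with
`A q = ∑_{n<N} ⌊n/q⌋ (F n - F (n+1))`. Summation by parts gives
`A q = ∑_{1 ≤ k ≤ N/q} F (k q) - (N/q) F N`, and the boundary terms `(N/q) F N` cancel in the
combination. Finally, with `c = b^l` and `r = N/c`,
`∑_{1 ≤ k ≤ r} F (k c) = c^(-α) (ζ(α, 1 + z/c) - ζ(α, 1 + z/c + r))`. -/

/-- Sum of digits of `n` in base `b`. -/
def digitSum (b n : ℕ) : ℕ := (Nat.digits b n).sum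

/-- Hurwitz zeta function `ζ(α, w) = ∑_{n ≥ 0} (w + n)^(-α)` for real `α > 1`, `w > 0`. -/
noncomputable def hurwitzZetaReal (α w : ℝ) : ℝ := ∑' n : ℕ, (w + n) ^ (-α)

open Finset

theorem digitSum_eq_sum_range_div_pow_mod {b : ℕ} (hb : 1 < b) {K m : ℕ} (hm : m < b ^ K) :
    digitSum b m = ∑ l ∈ range K, m / b ^ l % b := by
  induction K generalizing m with
  | zero => simp_all [digitSum]
  | succ K ih =>
    rcases eq_or_ne m 0 with rfl | hm0
    · simp [digitSum]
    rw [digitSum, Nat.digits_eq_cons_digits_div (by omega) hm0, List.sum_cons, ← digitSum,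
      ih (Nat.div_lt_of_lt_mul (by rwa [← pow_succ'])), sum_range_succ']
    simp only [Nat.div_div_eq_div_mul, pow_succ', pow_zero, Nat.div_one]
    ring

theorem natCast_div_pow_mod_eq_sub {R : Type*} [CommRing R] (b n l : ℕ) :
    ((n / b ^ l % b : ℕ) : R) = (n / b ^ l : ℕ) - b * (n / b ^ (l + 1) : ℕ) := by
  have h := Nat.mod_add_div (n / b ^ l) b
  rw [Nat.div_div_eq_div_mul, ← pow_succ] at h
  rw [eq_sub_iff_add_eq, ← Nat.cast_mul, ← Nat.cast_add, h]

theorem sum_range_div_mul_sub_succ {R : Type*} [CommRing R] (F : ℕ → R) {q : ℕ} (hq : 0 < q)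
    (r : ℕ) :
    ∑ n ∈ range (q * r), ((n / q : ℕ) : R) * (F n - F (n + 1)) =
      ∑ k ∈ range r, F ((k + 1) * q) - r * F (q * r) := by
  induction r with
  | zero => simp
  | succ r ih =>
    have hblock : ∑ i ∈ range q, (((q * r + i) / q : ℕ) : R) * (F (q * r + i) - F (q * r + i + 1))
        = r * (F (q * r) - F (q * r + q)) := by
      rw [sum_congr rfl fun i hi => by
          rw [Nat.mul_add_div hq, Nat.div_eq_of_lt (mem_range.1 hi), add_zero], ← mul_sum]
      exact congrArg _ (sum_range_sub' (fun i => F (q * r + i)) q)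
    rw [mul_add_one, sum_range_add, ih, hblock, sum_range_succ, show (r + 1) * q = q * r + q by ring]
    push_cast
    ring

theorem sum_range_digitSum_mul_sub_succ {R : Type*} [CommRing R] (F : ℕ → R) {b : ℕ}
    (hb : 1 < b) (p : ℕ) :
    ∑ n ∈ range (b ^ p), (digitSum b n : R) * (F n - F (n + 1)) =
      ∑ l ∈ range p, (∑ k ∈ range (b ^ (p - l)), F ((k + 1) * b ^ l) -
        b * ∑ k ∈ range (b ^ (p - (l + 1))), F ((k + 1) * b ^ (l + 1))) := by
  set A : ℕ → R := fun q => ∑ n ∈ range (b ^ p), ((n / q : ℕ) : R) * (F n - F (n + 1))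
  have hA : ∀ l ≤ p, A (b ^ l) =
      ∑ k ∈ range (b ^ (p - l)), F ((k + 1) * b ^ l) - (b : R) ^ (p - l) * F (b ^ p) := by
    intro l hl
    have h := sum_range_div_mul_sub_succ F (pow_pos (by omega : 0 < b) l) (b ^ (p - l))
    rw [← pow_add, Nat.add_sub_cancel' hl] at h
    exact_mod_cast h
  calc ∑ n ∈ range (b ^ p), (digitSum b n : R) * (F n - F (n + 1))
      = ∑ l ∈ range p, (A (b ^ l) - b * A (b ^ (l + 1))) := by
        rw [sum_congr rfl fun n hn => by
          rw [digitSum_eq_sum_range_div_pow_mod hb (mem_range.1 hn), Nat.cast_sum, sum_mul], sum_comm]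
        simp only [A, natCast_div_pow_mod_eq_sub, sub_mul, mul_assoc, sum_sub_distrib, mul_sum]
    _ = _ := sum_congr rfl fun l hl => by
        have hl := mem_range.1 hl
        have hpow : (b : R) ^ (p - l) = b * b ^ (p - (l + 1)) := by
          rw [← pow_succ']
          congr 1
          omega
        rw [hA l hl.le, hA (l + 1) hl, hpow]
        ring

theorem summable_add_nat_rpow_neg {α w : ℝ} (hα : 1 < α) (hw : 0 ≤ w) :
    Summable fun n : ℕ => (w + n) ^ (-α) := by
  refine (Real.summable_one_div_nat_add_rpow w α).2 hα |>.congr fun n => ?_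
  rw [abs_of_nonneg (by positivity), one_div, ← Real.rpow_neg (by positivity), add_comm]

theorem hurwitzZetaReal_sub_add_nat {α w : ℝ} (hα : 1 < α) (hw : 0 ≤ w) (M : ℕ) :
    hurwitzZetaReal α w - hurwitzZetaReal α (w + M) = ∑ m ∈ range M, (w + m) ^ (-α) := by
  rw [hurwitzZetaReal, hurwitzZetaReal,
    ← (summable_add_nat_rpow_neg hα hw).sum_add_tsum_nat_add M, add_sub_assoc, add_eq_left,
    sub_eq_zero]
  congr 1 with n
  push_cast
  ring_nf

theorem rpow_neg_mul_hurwitzZetaReal_sub {α c z : ℝ} (hα : 1 < α) (hc : 0 < c) (hz : 0 ≤ z)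
    (r : ℕ) :
    c ^ (-α) * (hurwitzZetaReal α (1 + z / c) - hurwitzZetaReal α (1 + (z + c * r) / c)) =
      ∑ k ∈ range r, (z + (k + 1) * c) ^ (-α) := by
  have hshift : 1 + (z + c * r) / c = 1 + z / c + r := by
    field_simp
    ring
  rw [hshift, hurwitzZetaReal_sub_add_nat hα (by positivity), mul_sum]
  refine sum_congr rfl fun k _ => ?_
  rw [← Real.mul_rpow hc.le (by positivity)]
  congr 1
  field_simp
  ring

theorem stmt0_general (b p : ℕ) (hb : 2 ≤ b) (α z : ℝ) (hα : 1 < α) (hz : 0 ≤ z) :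
    ∑ n ∈ Finset.Icc 1 (b ^ p - 1),
      (digitSum b n : ℝ) * ((z + n) ^ (-α) - (z + n + 1) ^ (-α)) =
    (∑ l ∈ Finset.range p, (b : ℝ) ^ (-(α * l)) *
      (hurwitzZetaReal α (1 + z / b ^ l) - hurwitzZetaReal α (1 + (z + b ^ p) / b ^ l))) -
    ∑ l ∈ Finset.Icc 1 p, (b : ℝ) * (b : ℝ) ^ (-(α * l)) *
      (hurwitzZetaReal α (1 + z / b ^ l) - hurwitzZetaReal α (1 + (z + b ^ p) / b ^ l)) := by
  set F : ℕ → ℝ := fun n => (z + n) ^ (-α)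
  have hZ : ∀ l ≤ p, (b : ℝ) ^ (-(α * l)) *
      (hurwitzZetaReal α (1 + z / b ^ l) - hurwitzZetaReal α (1 + (z + b ^ p) / b ^ l)) =
        ∑ k ∈ range (b ^ (p - l)), F ((k + 1) * b ^ l) := by
    intro l hl
    have hpow : (b : ℝ) ^ p = b ^ l * ((b ^ (p - l) : ℕ) : ℝ) := by
      rw [Nat.cast_pow, ← pow_add, Nat.add_sub_cancel' hl]
    rw [show -(α * l) = (l : ℝ) * -α by ring, Real.rpow_natCast_mul (Nat.cast_nonneg b), hpow,
      rpow_neg_mul_hurwitzZetaReal_sub hα (by positivity) hz]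
    simp only [F]
    push_cast
    rfl
  have hLHS : ∑ n ∈ Icc 1 (b ^ p - 1), (digitSum b n : ℝ) * ((z + n) ^ (-α) - (z + n + 1) ^ (-α))
      = ∑ n ∈ range (b ^ p), (digitSum b n : ℝ) * (F n - F (n + 1)) := by
    rw [range_eq_Ico, sum_eq_sum_Ico_succ_bot (by positivity),
      ← Icc_sub_one_right_eq_Ico_of_not_isMin (by simp; omega)]
    simp [F, digitSum, add_assoc]
  rw [hLHS, sum_range_digitSum_mul_sub_succ F hb, sum_sub_distrib, ← Ico_add_one_right_eq_Icc,
    sum_Ico_eq_sum_range, Nat.add_sub_cancel]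
  congr 1
  · exact (sum_congr rfl fun l hl => hZ l (mem_range.1 hl).le).symm
  · refine sum_congr rfl fun l hl => ?_
    rw [mul_assoc, hZ (1 + l) (by simpa [add_comm] using mem_range.1 hl), add_comm 1 l]

theorem stmt0 (b p : ℕ) (hb : 2 ≤ b) (hp : 1 ≤ p) (α z : ℝ) (hα : 1 < α) (hz : 0 ≤ z) :
    ∑ n ∈ Finset.Icc 1 (b ^ p - 1),
      (digitSum b n : ℝ) * ((z + n) ^ (-α) - (z + n + 1) ^ (-α)) =
    (∑ l ∈ Finset.range p, (b : ℝ) ^ (-(α * l)) *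
      (hurwitzZetaReal α (1 + z / b ^ l) - hurwitzZetaReal α (1 + (z + b ^ p) / b ^ l))) -
    ∑ l ∈ Finset.Icc 1 p, (b : ℝ) * (b : ℝ) ^ (-(α * l)) *
      (hurwitzZetaReal α (1 + z / b ^ l) - hurwitzZetaReal α (1 + (z + b ^ p) / b ^ l)) :=
  stmt0_general b p hb α z hα hz
end

section
/- Let b ≥ 2 be an integer, let p ≥ 1 be an integer, and let z ≥ 0 be real. Then ∑_{n=1}^{b^p−1} s_b(n)/((z+n)(z+n+1)) = ∑_{l=0}^{p−1} b^{−l}·[ψ(1 + (z+b^p)/b^l) − ψ(1 + z/b^l)] − ∑_{l=1}^{p} b·b^{−l}·[ψ(1 + (z+b^p)/b^l) − ψ(1 + z/b^l)]. -/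
/-- The digamma function `ψ(x) = Γ'(x)/Γ(x)`. -/
noncomputable def digamma (x : ℝ) : ℝ := deriv Real.Gamma x / Real.Gamma x

/-!
Write `s_b(n) = ∑ₗ (⌊n / bˡ⌋ - b ⌊n / bˡ⁺¹⌋)` and `1 / ((z + n)(z + n + 1)) = f n - f (n + 1)` with
`f n = 1 / (z + n)`. Summing by parts, the level-`l` term becomes `∑_{m=1}^K f (m bˡ) - K f (bᵖ)`
with `K = bᵖ⁻ˡ`; the boundary terms cancel between the levels `l` and `l + 1`, and
`∑_{m=1}^K 1 / (z + m c) = c⁻¹ (ψ(1 + (z + K c) / c) - ψ(1 + z / c))` by `ψ(x + 1) = ψ(x) + 1 / x`.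
-/

open Finset

lemma sum_range_nat_div_mul_sub {R : Type*} [CommRing R] (f : ℕ → R) {c : ℕ} (hc : 0 < c)
    (K : ℕ) :
    ∑ n ∈ range (K * c), ((n / c : ℕ) : R) * (f n - f (n + 1)) =
      ∑ m ∈ range K, f ((m + 1) * c) - K * f (K * c) := by
  induction K with
  | zero => simp
  | succ K ih =>
    have hblock : ∑ i ∈ range c, (((K * c + i) / c : ℕ) : R) * (f (K * c + i) - f (K * c + i + 1))
        = K * (f (K * c) - f ((K + 1) * c)) := by
      have hdiv : ∀ i ∈ range c, (K * c + i) / c = K := fun i hi => by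
        rw [add_comm, Nat.add_mul_div_right _ _ hc, Nat.div_eq_of_lt (mem_range.1 hi), zero_add]
      rw [sum_congr rfl fun i hi => by rw [hdiv i hi], ← mul_sum]
      simp_rw [add_assoc]
      rw [sum_range_sub' (fun i => f (K * c + i)), add_zero, add_one_mul]
    rw [add_one_mul, sum_range_add, ih, hblock, sum_range_succ, add_one_mul]
    push_cast
    ring

lemma Nat.digits_sum_eq_sum_range_div_pow_mod {b : ℕ} (hb : 2 ≤ b) {n p : ℕ} (hn : n < b ^ p) :
    (b.digits n).sum = ∑ l ∈ range p, n / b ^ l % b := by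
  induction p generalizing n with
  | zero => simp_all
  | succ p ih =>
    rcases Nat.eq_zero_or_pos n with rfl | hn0
    · simp
    have hdiv : n / b < b ^ p := Nat.div_lt_of_lt_mul (by rwa [← pow_succ'])
    rw [Nat.digits_def' (by omega) hn0, List.sum_cons, ih hdiv, sum_range_succ']
    simp [Nat.div_div_eq_div_mul, ← pow_succ', add_comm]

lemma digitSum_eq_sum_range_sub {b : ℕ} (hb : 2 ≤ b) {n p : ℕ} (hn : n < b ^ p) :
    (digitSum b n : ℝ) = ∑ l ∈ range p, (((n / b ^ l : ℕ) : ℝ) - b * (n / b ^ (l + 1) : ℕ)) := by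
  rw [digitSum, Nat.digits_sum_eq_sum_range_div_pow_mod hb hn, Nat.cast_sum]
  refine sum_congr rfl fun l _ => eq_sub_of_add_eq ?_
  rw [pow_succ, ← Nat.div_div_eq_div_mul]
  exact_mod_cast Nat.mod_add_div _ _

lemma deriv_Gamma_add_one {x : ℝ} (hx : 0 < x) :
    deriv Real.Gamma (x + 1) = Real.Gamma x + x * deriv Real.Gamma x := by
  have hshift : (fun y => Real.Gamma (y + 1)) =ᶠ[nhds x] fun y => y * Real.Gamma y := by
    filter_upwards [eventually_gt_nhds hx] with y hy
    rw [Real.Gamma_add_one hy.ne']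
  have hdiff : DifferentiableAt ℝ Real.Gamma x :=
    Real.differentiableAt_Gamma fun m => by nlinarith [m.cast_nonneg (α := ℝ)]
  rw [← deriv_comp_add_const, hshift.deriv_eq, deriv_fun_mul differentiableAt_fun_id hdiff]
  simp

lemma digamma_add_one {x : ℝ} (hx : 0 < x) : digamma (x + 1) = digamma x + x⁻¹ := by
  have hΓ : Real.Gamma x ≠ 0 := (Real.Gamma_pos_of_pos hx).ne'
  rw [digamma, digamma, deriv_Gamma_add_one hx, Real.Gamma_add_one hx.ne']
  field_simp
  ring

lemma digamma_add_nat {x : ℝ} (hx : 0 < x) (K : ℕ) :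
    digamma (x + K) = digamma x + ∑ m ∈ range K, (x + m)⁻¹ := by
  induction K with
  | zero => simp
  | succ K ih =>
    rw [Nat.cast_succ, ← add_assoc, digamma_add_one (by positivity), ih, sum_range_succ, add_assoc]

lemma sum_range_inv_add_mul_eq_digamma_sub {z c : ℝ} (hc : 0 < c) (hz : 0 < z + c) (K : ℕ) :
    ∑ m ∈ range K, (z + (m + 1) * c)⁻¹ =
      c⁻¹ * (digamma (1 + (z + K * c) / c) - digamma (1 + z / c)) := by
  have hx : 0 < 1 + z / c := by
    rw [one_add_div hc.ne']; exact div_pos (by linarith) hc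
  have harg : 1 + (z + K * c) / c = 1 + z / c + K := by field_simp; ring
  rw [harg, digamma_add_nat hx, add_sub_cancel_left, mul_sum]
  refine sum_congr rfl fun m _ => ?_
  field_simp
  ring

lemma sum_range_div_pow_mul_inv_sub_inv {b p l : ℕ} (hb : 0 < b) (hl : l ≤ p) {z : ℝ}
    (hz : 0 ≤ z) :
    ∑ n ∈ range (b ^ p), ((n / b ^ l : ℕ) : ℝ) * ((z + n)⁻¹ - (z + (n + 1 : ℕ))⁻¹) =
      ((b : ℝ) ^ l)⁻¹ * (digamma (1 + (z + b ^ p) / b ^ l) - digamma (1 + z / b ^ l)) -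
        (b ^ (p - l) : ℕ) * (z + b ^ p)⁻¹ := by
  have hKc : b ^ (p - l) * b ^ l = b ^ p := by rw [← pow_add, Nat.sub_add_cancel hl]
  have hKcR : (b : ℝ) ^ (p - l) * (b : ℝ) ^ l = (b : ℝ) ^ p := by exact_mod_cast hKc
  have h := sum_range_nat_div_mul_sub (fun n : ℕ => (z + n)⁻¹) (c := b ^ l) (by positivity)
    (b ^ (p - l))
  rw [hKc] at h
  rw [h]
  push_cast
  rw [sum_range_inv_add_mul_eq_digamma_sub (by positivity) (by positivity), Nat.cast_pow, hKcR]

lemma sum_Icc_div_mul_add_one_eq_sum_range {g : ℕ → ℝ} (hg : g 0 = 0) {z : ℝ} (hz : 0 ≤ z)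
    (N : ℕ) :
    ∑ n ∈ Icc 1 (N - 1), g n / ((z + n) * (z + n + 1)) =
      ∑ n ∈ range N, g n * ((z + n)⁻¹ - (z + (n + 1 : ℕ))⁻¹) := by
  rcases N.eq_zero_or_pos with rfl | hN
  · simp
  rw [sum_range_eq_add_Ico _ hN, Icc_sub_one_right_eq_Ico_of_not_isMin (not_isMin_of_lt hN), hg,
    zero_mul, zero_add]
  refine sum_congr rfl fun n hn => ?_
  have hzn : 0 < z + n := by have := (mem_Ico.1 hn).1; positivity
  push_cast
  field_simp
  ring

theorem stmt1_general (b p : ℕ) (hb : 2 ≤ b) (z : ℝ) (hz : 0 ≤ z) :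
    ∑ n ∈ Finset.Icc 1 (b ^ p - 1),
      (digitSum b n : ℝ) / ((z + n) * (z + n + 1)) =
    (∑ l ∈ Finset.range p, ((b : ℝ) ^ l)⁻¹ *
      (digamma (1 + (z + b ^ p) / b ^ l) - digamma (1 + z / b ^ l))) -
    ∑ l ∈ Finset.Icc 1 p, (b : ℝ) * ((b : ℝ) ^ l)⁻¹ *
      (digamma (1 + (z + b ^ p) / b ^ l) - digamma (1 + z / b ^ l)) := by
  set A : ℕ → ℝ := fun l =>
    ((b : ℝ) ^ l)⁻¹ * (digamma (1 + (z + b ^ p) / b ^ l) - digamma (1 + z / b ^ l))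
  set T : ℕ → ℝ := fun l =>
    ∑ n ∈ range (b ^ p), ((n / b ^ l : ℕ) : ℝ) * ((z + n)⁻¹ - (z + (n + 1 : ℕ))⁻¹)
  have hT : ∀ l ≤ p, T l = A l - (b ^ (p - l) : ℕ) * (z + b ^ p)⁻¹ := fun l hl =>
    sum_range_div_pow_mul_inv_sub_inv (by omega) hl hz
  rw [sum_Icc_div_mul_add_one_eq_sum_range (by simp [digitSum]) hz]
  calc
    _ = ∑ l ∈ range p, (T l - b * T (l + 1)) := by
      rw [sum_congr rfl fun n hn => by rw [digitSum_eq_sum_range_sub hb (mem_range.1 hn)]]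
      simp only [T, sum_mul, sub_mul, mul_sum, mul_assoc]
      rw [sum_comm]
      simp only [sum_sub_distrib]
    _ = ∑ l ∈ range p, (A l - b * A (l + 1)) := by
      refine sum_congr rfl fun l hl => ?_
      have hl := mem_range.1 hl
      rw [hT l hl.le, hT (l + 1) hl, show p - l = p - (l + 1) + 1 by omega]
      push_cast
      ring
    _ = _ := by
      rw [sum_sub_distrib, ← Ico_add_one_right_eq_Icc, sum_Ico_eq_sum_range]
      simp only [A, add_comm 1, mul_assoc, Nat.add_sub_cancel]

theorem stmt1 (b p : ℕ) (hb : 2 ≤ b) (hp : 1 ≤ p) (z : ℝ) (hz : 0 ≤ z) :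
    ∑ n ∈ Finset.Icc 1 (b ^ p - 1),
      (digitSum b n : ℝ) / ((z + n) * (z + n + 1)) =
    (∑ l ∈ Finset.range p, ((b : ℝ) ^ l)⁻¹ *
      (digamma (1 + (z + b ^ p) / b ^ l) - digamma (1 + z / b ^ l))) -
    ∑ l ∈ Finset.Icc 1 p, (b : ℝ) * ((b : ℝ) ^ l)⁻¹ *
      (digamma (1 + (z + b ^ p) / b ^ l) - digamma (1 + z / b ^ l)) :=
  stmt1_general b p hb z hz
end

section
/- For every natural number N and every real x ≥ 0, J_{2N+1}(x) = (1/2)·J_N(x/2) + γ_N(x), where J_N(x) = ∑_{n=1}^{N} s_2(n)/((x+n)(x+n+1)) and γ_N(x) = ∑_{n=0}^{N} 1/((x+2n+1)(x+2n+2)). -/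
/-- Number of ones in the binary expansion of `n` (sum of base-2 digits). -/
def s2 (n : ℕ) : ℕ := (Nat.digits 2 n).sum

/-- `J_N(x) = ∑_{n=1}^N s₂(n)/((x+n)(x+n+1))`. -/
noncomputable def J (N : ℕ) (x : ℝ) : ℝ :=
  ∑ n ∈ Finset.Icc 1 N, (s2 n : ℝ) / ((x + n) * (x + n + 1))

/-- `γ_N(x) = ∑_{n=0}^N 1/((x+2n+1)(x+2n+2))`. -/
noncomputable def gammaAux (N : ℕ) (x : ℝ) : ℝ :=
  ∑ n ∈ Finset.range (N + 1), 1 / ((x + 2 * n + 1) * (x + 2 * n + 2))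

/-!
Induction on `N`. Passing from `2N + 1` to `2N + 3` adds the two terms `n = 2N + 2` and
`n = 2N + 3` of `J`, whose digit sums are `s₂(N + 1)` and `s₂(N + 1) + 1`. With `a = x + 2N + 2`,
the identity `1/(a(a+1)) + 1/((a+1)(a+2)) = 2/(a(a+2))` turns the two copies of
`s₂(N + 1)` into the new term of `½ J_{N+1}(x/2)`, and the extra `1` is the new term of `γ_{N+1}(x)`.
-/

theorem s2_two_mul (n : ℕ) : s2 (2 * n) = s2 n := by
  rcases Nat.eq_zero_or_pos n with rfl | hn
  · rfl
  · rw [s2, Nat.digits_def' one_lt_two (by omega)]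
    simp [s2]

theorem s2_two_mul_add_one (n : ℕ) : s2 (2 * n + 1) = s2 n + 1 := by
  rw [s2, Nat.digits_def' one_lt_two (by omega), Nat.mul_add_mod_self_left,
    Nat.mul_add_div two_pos]
  simp [s2, add_comm]

theorem J_succ (m : ℕ) (x : ℝ) :
    J (m + 1) x = J m x + s2 (m + 1) / ((x + (m + 1)) * (x + (m + 1) + 1)) := by
  rw [J, Finset.sum_Icc_succ_top (by omega), ← J]
  push_cast
  rfl

theorem gammaAux_succ (n : ℕ) (x : ℝ) :
    gammaAux (n + 1) x = gammaAux n x + 1 / ((x + 2 * (n + 1) + 1) * (x + 2 * (n + 1) + 2)) := by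
  rw [gammaAux, Finset.sum_range_succ, ← gammaAux]
  push_cast
  rfl

theorem J_two_mul_add_three (n : ℕ) (x : ℝ) :
    J (2 * (n + 1) + 1) x = J (2 * n + 1) x + s2 (n + 1) / ((x + 2 * n + 2) * (x + 2 * n + 3))
      + (s2 (n + 1) + 1) / ((x + 2 * n + 3) * (x + 2 * n + 4)) := by
  have h_even : s2 (2 * n + 1 + 1) = s2 (n + 1) := s2_two_mul (n + 1)
  have h_odd : s2 (2 * n + 1 + 1 + 1) = s2 (n + 1) + 1 := s2_two_mul_add_one (n + 1)
  rw [show 2 * (n + 1) + 1 = 2 * n + 1 + 1 + 1 by ring, J_succ, J_succ, h_even, h_odd]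
  push_cast
  ring_nf

theorem div_add_succ_div_eq (s a : ℝ) (ha : 0 < a) :
    s / (a * (a + 1)) + (s + 1) / ((a + 1) * (a + 2)) =
      1 / 2 * (s / (a / 2 * (a / 2 + 1))) + 1 / ((a + 1) * (a + 2)) := by
  field_simp
  ring

theorem stmt4 (N : ℕ) (x : ℝ) (hx : 0 ≤ x) :
    J (2 * N + 1) x = (1 / 2) * J N (x / 2) + gammaAux N x := by
  induction N with
  | zero => norm_num [J, gammaAux, s2, add_assoc, one_add_one_eq_two]
  | succ n ih =>
    rw [J_two_mul_add_three, ih, J_succ n (x / 2), gammaAux_succ]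
    have h_pair := div_add_succ_div_eq (s2 (n + 1)) (x + 2 * n + 2) (by positivity)
    linear_combination h_pair
end

section
/- Let b ≥ 2 be an integer and let z > −1 be real. Then the infinite product ∏_{n=1}^{∞} ((1 + z/n)/(1 + z/(n+1)))^{s_b(n)} converges and equals b^{zb/(b−1)} · ∏_{l=0}^{∞} Γ(1 + z/b^{l+1})^b / Γ(1 + z/b^l), where Γ denotes the Gamma function. -/
/-!
Write `s = s_b` and `t(n) = log (1 + z/n)`. The logarithm of the product is
`∑ₙ s(n) (t(n) - t(n+1))`; summing by parts up to `N = b^K`, where `s(b^K) = 1`, leaves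
`∑_{n ≤ b^K} (s(n) - s(n-1)) t(n)` plus a vanishing boundary term. As
`s(n) - s(n-1) = 1 - (b-1) · #{i ≥ 1 : b^i ∣ n}`, that sum regroups into
`∑_{l<K} D(K-1-l, z/b^l) + t(b^K)` with
`D(j, w) = ∑_{m ≤ b^(j+1)} log (1 + w/m) - b ∑_{m ≤ b^j} log (1 + w/(b m))`.
Euler's limit `∑_{m ≤ M} log (1 + w/m) = w log M - log Γ(1+w) + o(1)` gives
`D(j, w) → b log Γ(1 + w/b) - log Γ(1 + w) + w log b`, and comparing the `m`-th term of the first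
sum with the `⌈m/b⌉`-th term of the second gives `|D(j, w)| = O(|w|)` uniformly in `j`. Tannery's
theorem then evaluates the limit as `K → ∞`; the `w log b` terms form a geometric series whose sum
gives the factor `b^(zb/(b-1))`.
-/

open Filter Finset Real Topology

lemma min_one_le_one_add_div {w x : ℝ} (hw : -1 < w) (hx : 1 ≤ x) :
    min 1 (1 + w) ≤ 1 + w / x := by
  rcases le_or_gt 0 w with h | h
  · exact (min_le_left _ _).trans (le_add_of_nonneg_right (by positivity))
  · have : w ≤ w / x := by rw [le_div_iff₀ (by linarith)]; nlinarith
    linarith [min_le_right 1 (1 + w)]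

lemma one_add_div_pos {w x : ℝ} (hw : -1 < w) (hx : 1 ≤ x) : 0 < 1 + w / x :=
  (lt_min one_pos (by linarith)).trans_le (min_one_le_one_add_div hw hx)

lemma neg_one_lt_div {w x : ℝ} (hw : -1 < w) (hx : 1 ≤ x) : -1 < w / x := by
  linarith [one_add_div_pos hw hx]

lemma abs_log_sub_log_le {a c ε : ℝ} (hε : 0 < ε) (ha : ε ≤ a) (hc : ε ≤ c) :
    |log a - log c| ≤ |a - c| / ε := by
  wlog h : c ≤ a generalizing a c
  · rw [abs_sub_comm, abs_sub_comm a]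
    exact this hc ha (le_of_not_ge h)
  have ha0 : 0 < a := hε.trans_le ha
  have hc0 : 0 < c := hε.trans_le hc
  rw [abs_of_nonneg (sub_nonneg.2 (log_le_log hc0 h)), abs_of_nonneg (sub_nonneg.2 h),
    ← log_div ha0.ne' hc0.ne']
  calc log (a / c) ≤ a / c - 1 := log_le_sub_one_of_pos (div_pos ha0 hc0)
    _ = (a - c) / c := by field_simp
    _ ≤ (a - c) / ε := div_le_div_of_nonneg_left (by linarith) hε hc

lemma abs_log_one_add_div_sub_le {w x y ε : ℝ} (hε : 0 < ε) (hx : 0 < x) (hy : 0 < y)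
    (hεx : ε ≤ 1 + w / x) (hεy : ε ≤ 1 + w / y) :
    |log (1 + w / x) - log (1 + w / y)| ≤ |w| * |y - x| / (ε * (x * y)) := by
  refine (abs_log_sub_log_le hε hεx hεy).trans (le_of_eq ?_)
  rw [show 1 + w / x - (1 + w / y) = w * (y - x) / (x * y) by field_simp; ring, abs_div, abs_mul,
    abs_of_pos (mul_pos hx hy), div_div, mul_comm ε]

lemma tendsto_log_one_add_div_atTop (w : ℝ) :
    Tendsto (fun x : ℝ => log (1 + w / x)) atTop (𝓝 0) := by
  have h : Tendsto (fun x : ℝ => 1 + w / x) atTop (𝓝 1) := by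
    simpa using (tendsto_const_nhds.div_atTop tendsto_id).const_add (1 : ℝ)
  have := (continuousAt_log one_ne_zero).tendsto.comp h
  rwa [log_one] at this

lemma sum_range_succ_mul_sub_eq {R : Type*} [CommRing R] (c t : ℕ → R) (hc : c 0 = 0) (N : ℕ) :
    ∑ n ∈ range N, c (n + 1) * (t (n + 1) - t (n + 2)) =
      ∑ n ∈ range N, (c (n + 1) - c n) * t (n + 1) - c N * t (N + 1) := by
  induction N with
  | zero => simp [hc]
  | succ N ih => rw [sum_range_succ, sum_range_succ, ih]; ring

lemma sum_range_ite_dvd {M : Type*} [AddCommMonoid M] (d N : ℕ) (f : ℕ → M) :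
    ∑ n ∈ range N, (if d ∣ n + 1 then f (n + 1) else 0) = ∑ m ∈ range (N / d), f ((m + 1) * d) := by
  induction N with
  | zero => simp
  | succ N ih =>
    rw [sum_range_succ, ih, Nat.succ_div]
    split_ifs with h
    · rw [sum_range_succ, ← Nat.succ_div_of_dvd h, Nat.div_mul_cancel h]
    · simp

lemma sum_range_mul_div {M : Type*} [AddCommMonoid M] (b K : ℕ) (hb : 0 < b) (f : ℕ → M) :
    ∑ m ∈ range (K * b), f (m / b) = b • ∑ m ∈ range K, f m := by
  induction K with
  | zero => simp
  | succ K ih =>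
    rw [add_mul, one_mul, sum_range_add, ih, sum_range_succ, smul_add]
    congr 1
    rw [sum_congr rfl fun i hi => ?_, sum_const, card_range]
    rw [Nat.mul_comm, Nat.mul_add_div hb, Nat.div_eq_of_lt (mem_range.1 hi), add_zero]

lemma sum_range_one_div_add_one_sq_le_two (M : ℕ) :
    ∑ m ∈ range M, 1 / ((m : ℝ) + 1) ^ 2 ≤ 2 := by
  have := sum_Ioo_inv_sq_le (α := ℝ) 0 (M + 1)
  rw [← Finset.Ico_add_one_left_eq_Ioo, sum_Ico_eq_sum_range] at this
  simpa [add_comm] using this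

lemma sum_range_sub_mul_succ_add {R : Type*} [CommRing R] (W : ℕ → R) (c : R) (K : ℕ) :
    ∑ l ∈ range K, (W l - c * W (l + 1)) + W K = W 0 - (c - 1) * ∑ l ∈ range K, W (l + 1) := by
  induction K with
  | zero => simp
  | succ K ih => rw [sum_range_succ, sum_range_succ, ← sub_eq_zero, ← sub_eq_zero.2 ih]; ring

section DigitSum

variable {b : ℕ}

lemma digitSum_base_pow (hb : 1 < b) (K : ℕ) : digitSum b (b ^ K) = 1 := by
  have h := Nat.digits_base_pow_mul (k := K) (m := 1) hb one_pos
  rw [mul_one] at h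
  simp [digitSum, h, Nat.digits_of_lt b 1 one_ne_zero hb]

lemma cast_digitSum_eq (hb : 1 < b) {K n : ℕ} (hn : n < b ^ (K + 1)) :
    (digitSum b n : ℝ) = n - (b - 1) * ∑ i ∈ range K, ((n / b ^ (i + 1) : ℕ) : ℝ) := by
  have hvanish : ∀ i, Nat.log b n ≤ i → n / b ^ (i + 1) = 0 := fun i hi =>
    Nat.div_eq_of_lt <| (Nat.lt_pow_succ_log_self hb n).trans_le (Nat.pow_le_pow_right (by omega)
      (by omega))
  have hlog : Nat.log b n ≤ K := by
    rcases eq_or_ne n 0 with rfl | hn0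
    · simp
    · exact Nat.lt_succ_iff.1 (Nat.log_lt_of_lt_pow hn0 hn)
  have htrunc : ∀ J, Nat.log b n ≤ J →
      ∑ i ∈ range J, n / b ^ (i + 1) = ∑ i ∈ range (Nat.log b n), n / b ^ (i + 1) := fun J hJ =>
    (sum_subset (range_subset_range.2 hJ) fun i _ hi => hvanish i (by simpa using hi)).symm
  have h := Nat.sub_one_mul_sum_log_div_pow_eq_sub_sum_digits (p := b) n
  rw [Nat.succ_eq_add_one, htrunc _ (by omega), ← htrunc K hlog] at h
  have hle := Nat.digit_sum_le b n
  have hnat : (b - 1) * ∑ i ∈ range K, n / b ^ (i + 1) + digitSum b n = n := by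
    rw [digitSum]; omega
  have hcast := congrArg (Nat.cast : ℕ → ℝ) hnat
  push_cast [Nat.cast_sub (by omega : 1 ≤ b)] at hcast
  linarith

lemma digitSum_succ_sub (hb : 1 < b) {K m : ℕ} (hm : m + 1 < b ^ (K + 1)) :
    (digitSum b (m + 1) : ℝ) - digitSum b m =
      1 - (b - 1) * ∑ i ∈ range K, (if b ^ (i + 1) ∣ m + 1 then 1 else 0) := by
  have hsucc : ∀ i, (((m + 1) / b ^ (i + 1) : ℕ) : ℝ) =
      (m / b ^ (i + 1) : ℕ) + if b ^ (i + 1) ∣ m + 1 then 1 else 0 := by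
    intro i
    rw [Nat.succ_div]
    split_ifs <;> simp
  rw [cast_digitSum_eq hb hm, cast_digitSum_eq (K := K) hb (by omega)]
  simp_rw [hsucc, sum_add_distrib]
  push_cast
  ring

lemma digitSum_le_rpow (hb : 1 < b) (n : ℕ) :
    (digitSum b n : ℝ) ≤ 5 * b * (n : ℝ) ^ (1 / 2 : ℝ) := by
  rcases eq_or_ne n 0 with rfl | hn
  · simp [digitSum]
  set L := Nat.log b n
  have hdigits : digitSum b n ≤ (L + 1) * (b - 1) := by
    have := List.sum_le_card_nsmul (Nat.digits b n) (b - 1)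
      fun x hx => Nat.le_sub_one_of_lt (Nat.digits_lt_base hb hx)
    rwa [Nat.length_digits b n hb hn, smul_eq_mul] at this
  have hb2 : (2 : ℝ) ≤ b := by exact_mod_cast hb
  have hn1 : (1 : ℝ) ≤ n := by exact_mod_cast Nat.one_le_iff_ne_zero.2 hn
  have hlogL : L * log 2 ≤ 2 * (n : ℝ) ^ (1 / 2 : ℝ) := by
    calc L * log 2 ≤ L * log b := by gcongr
      _ = log ((b : ℝ) ^ L) := (log_pow (b : ℝ) L).symm
      _ ≤ log n := log_le_log (by positivity) (by exact_mod_cast Nat.pow_log_le_self b hn)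
      _ ≤ (n : ℝ) ^ (1 / 2 : ℝ) / (1 / 2) := log_le_rpow_div (by positivity) (by norm_num)
      _ = 2 * (n : ℝ) ^ (1 / 2 : ℝ) := by ring
  have hsqrt : 1 ≤ (n : ℝ) ^ (1 / 2 : ℝ) := one_le_rpow hn1 (by norm_num)
  have hL : (L : ℝ) ≤ 4 * (n : ℝ) ^ (1 / 2 : ℝ) := by
    nlinarith [log_two_gt_d9, Nat.cast_nonneg (α := ℝ) L]
  calc (digitSum b n : ℝ) ≤ ((L + 1) * (b - 1) : ℕ) := by exact_mod_cast hdigits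
    _ = ((L : ℝ) + 1) * (b - 1) := by push_cast [Nat.cast_sub (by omega : 1 ≤ b)]; ring
    _ ≤ 5 * b * (n : ℝ) ^ (1 / 2 : ℝ) := by nlinarith

lemma summable_digitSum_div_sq (hb : 1 < b) :
    Summable fun n : ℕ => (digitSum b (n + 1) : ℝ) / ((n : ℝ) + 1) ^ 2 := by
  have hp : Summable fun n : ℕ => (((n + 1 : ℕ) : ℝ) ^ (3 / 2 : ℝ))⁻¹ :=
    (summable_nat_add_iff 1).2 (summable_nat_rpow_inv.2 (by norm_num))
  refine Summable.of_nonneg_of_le (fun n => by positivity) (fun n => ?_) (hp.mul_left (5 * (b : ℝ)))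
  have hx : (0 : ℝ) < (n : ℝ) + 1 := by positivity
  have hsplit : ((n : ℝ) + 1) ^ 2 = ((n : ℝ) + 1) ^ (1 / 2 : ℝ) * ((n : ℝ) + 1) ^ (3 / 2 : ℝ) := by
    rw [← rpow_add hx, ← rpow_natCast]; norm_num
  have := digitSum_le_rpow hb (n + 1)
  push_cast at this ⊢
  rw [hsplit, div_le_iff₀ (by positivity)]
  calc (digitSum b (n + 1) : ℝ) ≤ 5 * b * ((n : ℝ) + 1) ^ (1 / 2 : ℝ) := this
    _ = _ := by field_simp

end DigitSum

noncomputable def logPartialProd (M : ℕ) (w : ℝ) : ℝ :=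
  ∑ m ∈ range M, log (1 + w / (m + 1))

lemma logPartialProd_eq {w : ℝ} (hw : -1 < w) (M : ℕ) :
    logPartialProd M w =
      (1 + w) * log M - BohrMollerup.logGammaSeq (1 + w) M - log (1 + w + M) := by
  induction M with
  | zero => simp [logPartialProd, BohrMollerup.logGammaSeq]
  | succ M ih =>
    have hM : (0 : ℝ) < M + 1 := by positivity
    have hwM : 0 < 1 + w + M := by have := M.cast_nonneg (α := ℝ); linarith
    rw [logPartialProd, sum_range_succ, ← logPartialProd, ih,
      show 1 + w / (M + 1) = (1 + w + M) / (M + 1) by field_simp; ring, log_div hwM.ne' hM.ne']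
    simp only [BohrMollerup.logGammaSeq, Nat.factorial_succ, sum_range_succ, Nat.cast_mul,
      Nat.cast_succ]
    rw [log_mul hM.ne' (by positivity)]
    ring

lemma tendsto_logPartialProd_sub_mul_log {w : ℝ} (hw : -1 < w) :
    Tendsto (fun M : ℕ => logPartialProd M w - w * log M) atTop
      (𝓝 (-log (Gamma (1 + w)))) := by
  have hshift : Tendsto (fun M : ℕ => log (1 + (1 + w) / M)) atTop (𝓝 0) :=
    (tendsto_log_one_add_div_atTop (1 + w)).comp tendsto_natCast_atTop_atTop
  have := hshift.neg.sub (BohrMollerup.tendsto_log_gamma (by linarith : 0 < 1 + w))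
  rw [neg_zero, zero_sub] at this
  refine this.congr' ?_
  filter_upwards [eventually_gt_atTop 0] with M hM
  have hM : (0 : ℝ) < M := by exact_mod_cast hM
  have hwM : 0 < 1 + w + M := by linarith
  rw [logPartialProd_eq hw, show 1 + (1 + w) / M = (1 + w + M) / M by field_simp; ring,
    log_div hwM.ne' hM.ne']
  ring

noncomputable def blockDefect (b j : ℕ) (w : ℝ) : ℝ :=
  logPartialProd (b ^ (j + 1)) w - b * logPartialProd (b ^ j) (w / b)

noncomputable def blockLimit (b : ℕ) (w : ℝ) : ℝ :=
  b * log (Gamma (1 + w / b)) - log (Gamma (1 + w)) + w * log b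

section BlockDefect

variable {b : ℕ}

lemma tendsto_blockDefect (hb : 1 < b) {w : ℝ} (hw : -1 < w) :
    Tendsto (fun j => blockDefect b j w) atTop (𝓝 (blockLimit b w)) := by
  have hpow : Tendsto (fun j : ℕ => b ^ j) atTop atTop := tendsto_pow_atTop_atTop_of_one_lt hb
  have h1 := (tendsto_logPartialProd_sub_mul_log hw).comp (hpow.comp (tendsto_add_atTop_nat 1))
  have h2 := (tendsto_logPartialProd_sub_mul_log
    (neg_one_lt_div hw (Nat.one_le_cast.2 hb.le))).comp hpow
  convert (h1.sub (h2.const_mul (b : ℝ))).add_const (w * log b) using 2 with j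
  · simp only [blockDefect, Function.comp_apply, Nat.cast_pow, log_pow]
    field_simp
    push_cast
    ring
  · rw [blockLimit]
    ring

lemma abs_log_one_add_div_sub_next_multiple_le (hb : 0 < b) {w ε : ℝ} (hε : 0 < ε)
    (hεw : ∀ x : ℝ, 1 ≤ x → ε ≤ 1 + w / x) (m : ℕ) :
    |log (1 + w / (m + 1)) - log (1 + w / (b * ((m / b : ℕ) + 1)))| ≤
      (b - 1) * |w| / ε * (1 / ((m : ℝ) + 1) ^ 2) := by
  have hb1 : (1 : ℝ) ≤ b := by exact_mod_cast hb
  have hlo : (m : ℝ) + 1 ≤ b * ((m / b : ℕ) + 1) := by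
    exact_mod_cast Nat.lt_mul_div_succ m hb
  have hgap : |b * ((m / b : ℕ) + 1) - ((m : ℝ) + 1)| ≤ b - 1 := by
    have := Nat.mul_div_le m b
    have hhi : (b : ℝ) * ((m / b : ℕ) + 1) ≤ m + b := by
      rw [mul_add_one]
      exact_mod_cast (by omega : b * (m / b) + b ≤ m + b)
    rw [abs_of_nonneg (by linarith)]
    linarith
  have hx : (0 : ℝ) < m + 1 := by positivity
  refine (abs_log_one_add_div_sub_le hε hx (hx.trans_le hlo) (hεw _ (by simp))
    (hεw _ ((le_add_of_nonneg_left m.cast_nonneg).trans hlo))).trans ?_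
  calc _ ≤ |w| * (b - 1) / (ε * ((m + 1) * (m + 1))) :=
        div_le_div₀ (mul_nonneg (abs_nonneg w) (by linarith)) (by gcongr) (by positivity)
          (by gcongr)
    _ = (b - 1) * |w| / ε * (1 / ((m : ℝ) + 1) ^ 2) := by field_simp

lemma abs_blockDefect_le (hb : 0 < b) {w ε : ℝ} (hε : 0 < ε)
    (hεw : ∀ x : ℝ, 1 ≤ x → ε ≤ 1 + w / x) (j : ℕ) :
    |blockDefect b j w| ≤ 2 * (b - 1) * |w| / ε := by
  have hregroup : blockDefect b j w = ∑ m ∈ range (b ^ (j + 1)),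
      (log (1 + w / (m + 1)) - log (1 + w / (b * ((m / b : ℕ) + 1)))) := by
    rw [blockDefect, logPartialProd, logPartialProd, sum_sub_distrib, pow_succ,
      sum_range_mul_div b _ hb fun q => log (1 + w / (b * ((q : ℝ) + 1))), nsmul_eq_mul]
    simp_rw [div_div]
  have hC : 0 ≤ (b - 1) * |w| / ε := by
    have : (1 : ℝ) ≤ b := by exact_mod_cast hb
    have := abs_nonneg w
    positivity
  rw [hregroup]
  calc _ ≤ ∑ m ∈ range (b ^ (j + 1)), (b - 1) * |w| / ε * (1 / ((m : ℝ) + 1) ^ 2) :=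
        (abs_sum_le_sum_abs _ _).trans
          (sum_le_sum fun m _ => abs_log_one_add_div_sub_next_multiple_le hb hε hεw m)
    _ ≤ (b - 1) * |w| / ε * 2 := by
        rw [← mul_sum]
        exact mul_le_mul_of_nonneg_left (sum_range_one_div_add_one_sq_le_two _) hC
    _ = 2 * (b - 1) * |w| / ε := by ring

variable {z : ℝ}

lemma abs_blockDefect_div_pow_le (hb : 0 < b) (hz : -1 < z) (j l : ℕ) :
    |blockDefect b j (z / b ^ l)| ≤ 2 * (b - 1) * |z| / min 1 (1 + z) * (b : ℝ)⁻¹ ^ l := by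
  have hbl : (1 : ℝ) ≤ (b : ℝ) ^ l := one_le_pow₀ (Nat.one_le_cast.2 hb)
  refine (abs_blockDefect_le hb (ε := min 1 (1 + z)) (lt_min one_pos (by linarith))
    (fun x hx => ?_) j).trans_eq ?_
  · rw [div_div]
    exact min_one_le_one_add_div hz (one_le_mul_of_one_le_of_one_le hbl hx)
  · rw [abs_div, abs_of_pos (by linarith : (0 : ℝ) < (b : ℝ) ^ l), inv_pow]
    ring

lemma summable_blockLimit (hb : 1 < b) (hz : -1 < z) :
    Summable fun l : ℕ => blockLimit b (z / b ^ l) := by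
  have hb1 : (1 : ℝ) < b := by exact_mod_cast hb
  refine Summable.of_norm_bounded
    ((summable_geometric_of_lt_one (by positivity) (inv_lt_one_of_one_lt₀ hb1)).mul_left
      (2 * (b - 1) * |z| / min 1 (1 + z))) fun l => ?_
  have hw : -1 < z / b ^ l := neg_one_lt_div hz (one_le_pow₀ hb1.le)
  exact le_of_tendsto' (tendsto_blockDefect hb hw).abs fun j =>
    abs_blockDefect_div_pow_le hb.pos hz j l

lemma tendsto_sum_blockDefect (hb : 1 < b) (hz : -1 < z) :
    Tendsto (fun K => ∑ l ∈ range K, blockDefect b (K - 1 - l) (z / b ^ l)) atTop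
      (𝓝 (∑' l, blockLimit b (z / b ^ l))) := by
  have hb1 : (1 : ℝ) < b := by exact_mod_cast hb
  have hlim := tendsto_tsum_of_dominated_convergence (𝓕 := atTop)
    (g := fun l => blockLimit b (z / b ^ l))
    (f := fun K l => if l < K then blockDefect b (K - 1 - l) (z / b ^ l) else 0)
    ((summable_geometric_of_lt_one (by positivity) (inv_lt_one_of_one_lt₀ hb1)).mul_left
      (2 * (b - 1) * |z| / min 1 (1 + z))) (fun l => ?_) (.of_forall fun K l => ?_)
  · refine hlim.congr fun K => ?_
    rw [tsum_eq_sum (s := range K) fun l hl => if_neg (by simpa using hl)]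
    exact sum_congr rfl fun l hl => if_pos (mem_range.1 hl)
  · refine ((tendsto_blockDefect hb (neg_one_lt_div hz (one_le_pow₀ hb1.le))).comp
      (tendsto_sub_atTop_nat (l + 1))).congr' ?_
    filter_upwards [eventually_gt_atTop l] with K hK
    simp [hK, Nat.sub_sub, add_comm]
  · split_ifs
    · exact abs_blockDefect_div_pow_le hb.pos hz _ l
    · simpa using (abs_nonneg _).trans (abs_blockDefect_div_pow_le hb.pos hz 0 l)

lemma sum_digitSum_succ_sub_mul_log (hb : 1 < b) (z : ℝ) (K : ℕ) :
    ∑ n ∈ range (b ^ K), ((digitSum b (n + 1) : ℝ) - digitSum b n) * log (1 + z / (n + 1)) =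
      ∑ l ∈ range K, blockDefect b (K - 1 - l) (z / b ^ l) + log (1 + z / b ^ K) := by
  -- `W l` is the sum of `log (1 + z / n)` over the multiples `n ≤ b ^ K` of `b ^ l`.
  set W : ℕ → ℝ := fun l => logPartialProd (b ^ (K - l)) (z / b ^ l)
  have hstep : ∀ n ∈ range (b ^ K),
      ((digitSum b (n + 1) : ℝ) - digitSum b n) * log (1 + z / (n + 1)) =
        log (1 + z / (n + 1)) - (b - 1) *
          ∑ i ∈ range K, if b ^ (i + 1) ∣ n + 1 then log (1 + z / (n + 1)) else 0 := by
    intro n hn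
    have := Nat.pow_lt_pow_succ hb (n := K)
    rw [digitSum_succ_sub hb (K := K) (by simp at hn; omega), sub_mul, one_mul, mul_assoc, sum_mul]
    simp only [ite_mul, one_mul, zero_mul]
  have hdvd : ∀ i ∈ range K,
      ∑ n ∈ range (b ^ K), (if b ^ (i + 1) ∣ n + 1 then log (1 + z / (n + 1)) else 0) =
        W (i + 1) := by
    intro i hi
    have := sum_range_ite_dvd (b ^ (i + 1)) (b ^ K) fun n => log (1 + z / n)
    push_cast at this
    rw [this, Nat.pow_div (by simpa using hi) (by omega)]
    refine sum_congr rfl fun m _ => ?_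
    rw [div_div, mul_comm]
  calc _ = W 0 - (b - 1) * ∑ i ∈ range K, W (i + 1) := by
        rw [sum_congr rfl hstep, sum_sub_distrib, ← mul_sum, sum_comm, sum_congr rfl hdvd]
        simp [W, logPartialProd]
    _ = ∑ l ∈ range K, (W l - b * W (l + 1)) + W K := (sum_range_sub_mul_succ_add W b K).symm
    _ = _ := by
        congr 1
        · refine sum_congr rfl fun l hl => ?_
          have hKl : K - l = K - 1 - l + 1 := by simp at hl; omega
          simp only [W, blockDefect, hKl, Nat.sub_add_eq, Nat.add_sub_cancel, div_div, ← pow_succ]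
        · simp [W, logPartialProd]

lemma summable_digitSum_mul_log_sub (hb : 1 < b) (hz : -1 < z) :
    Summable fun n : ℕ => (digitSum b (n + 1) : ℝ) *
      (log (1 + z / (n + 1)) - log (1 + z / (n + 2))) := by
  set ε := min 1 (1 + z)
  have hε : 0 < ε := lt_min one_pos (by linarith)
  refine Summable.of_norm_bounded ((summable_digitSum_div_sq hb).mul_left (|z| / ε)) fun n => ?_
  have hn : (0 : ℝ) ≤ n := n.cast_nonneg
  have hlog := abs_log_one_add_div_sub_le hε (by positivity) (by positivity)
    (min_one_le_one_add_div hz (by linarith : (1 : ℝ) ≤ n + 1))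
    (min_one_le_one_add_div hz (by linarith : (1 : ℝ) ≤ n + 2))
  rw [show (n : ℝ) + 2 - (n + 1) = 1 by ring, abs_one, mul_one] at hlog
  rw [norm_mul, Real.norm_natCast, Real.norm_eq_abs]
  calc _ ≤ (digitSum b (n + 1) : ℝ) * (|z| / (ε * ((n + 1) * (n + 2)))) := by gcongr
    _ ≤ (digitSum b (n + 1) : ℝ) * (|z| / (ε * ((n : ℝ) + 1) ^ 2)) := by
      gcongr
      nlinarith
    _ = _ := by field_simp

lemma sum_range_pow_digitSum_mul_log_sub (hb : 1 < b) (z : ℝ) (K : ℕ) :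
    ∑ n ∈ range (b ^ K), (digitSum b (n + 1) : ℝ) *
      (log (1 + z / (n + 1)) - log (1 + z / (n + 2))) =
        ∑ l ∈ range K, blockDefect b (K - 1 - l) (z / b ^ l) + log (1 + z / b ^ K) -
          log (1 + z / (b ^ K + 1)) := by
  have := sum_range_succ_mul_sub_eq (fun n => (digitSum b n : ℝ)) (fun n => log (1 + z / n))
    (by simp [digitSum]) (b ^ K)
  push_cast at this
  rw [this, sum_digitSum_succ_sub_mul_log hb, digitSum_base_pow hb, Nat.cast_one, one_mul]

lemma hasSum_digitSum_mul_log_sub (hb : 1 < b) (hz : -1 < z) :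
    HasSum (fun n : ℕ => (digitSum b (n + 1) : ℝ) *
        (log (1 + z / (n + 1)) - log (1 + z / (n + 2))))
      (∑' l, blockLimit b (z / b ^ l)) := by
  have hpow : Tendsto (fun K : ℕ => (b : ℝ) ^ K) atTop atTop :=
    tendsto_pow_atTop_atTop_of_one_lt (by exact_mod_cast hb)
  have hlim := ((tendsto_sum_blockDefect hb hz).add
    ((tendsto_log_one_add_div_atTop z).comp hpow)).sub
    ((tendsto_log_one_add_div_atTop z).comp (tendsto_atTop_add_const_right _ 1 hpow))
  rw [add_zero, sub_zero] at hlim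
  have hS := (summable_digitSum_mul_log_sub hb hz).hasSum
  rwa [tendsto_nhds_unique (hS.tendsto_sum_nat.comp (tendsto_pow_atTop_atTop_of_one_lt hb))
    (hlim.congr fun K => (sum_range_pow_digitSum_mul_log_sub hb z K).symm)] at hS

lemma hasSum_log_Gamma_ratio (hb : 1 < b) (hz : -1 < z) :
    HasSum (fun l : ℕ => log (Gamma (1 + z / b ^ (l + 1)) ^ b / Gamma (1 + z / b ^ l)))
      (∑' l, blockLimit b (z / b ^ l) - z * b / (b - 1) * log b) := by
  have hb1 : (1 : ℝ) < b := by exact_mod_cast hb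
  have hgeom : HasSum (fun l : ℕ => z / b ^ l * log b) (z * b / (b - 1) * log b) := by
    rw [show z * b / (b - 1) * log b = z * log b * (1 - (b : ℝ)⁻¹)⁻¹ by field_simp]
    refine ((hasSum_geometric_of_lt_one (by positivity) (inv_lt_one_of_one_lt₀ hb1)).mul_left
      (z * log b)).congr_fun fun l => ?_
    rw [inv_pow, div_eq_mul_inv]
    ring
  have hΓ : ∀ l : ℕ, 0 < Gamma (1 + z / b ^ l) := fun l =>
    Gamma_pos_of_pos (one_add_div_pos hz (one_le_pow₀ hb1.le))
  refine ((summable_blockLimit hb hz).hasSum.sub hgeom).congr_fun fun l => ?_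
  rw [log_div (pow_pos (hΓ _) _).ne' (hΓ l).ne', log_pow, blockLimit, div_div, ← pow_succ]
  ring

end BlockDefect

theorem stmt9 (b : ℕ) (hb : 2 ≤ b) (z : ℝ) (hz : -1 < z) :
    HasProd
      (fun n : ℕ =>
        ((1 + z / (n + 1)) / (1 + z / (n + 2))) ^ digitSum b (n + 1))
      ((b : ℝ) ^ (z * b / ((b : ℝ) - 1)) *
        ∏' l : ℕ, Real.Gamma (1 + z / b ^ (l + 1)) ^ b / Real.Gamma (1 + z / b ^ l)) := by
  have hn1 : ∀ n : ℕ, 0 < 1 + z / ((n : ℝ) + 1) := fun n => one_add_div_pos hz (by simp)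
  have hn2 : ∀ n : ℕ, 0 < 1 + z / ((n : ℝ) + 2) := fun n =>
    one_add_div_pos hz (by linarith [n.cast_nonneg (α := ℝ)])
  have hb1 : (1 : ℝ) < b := by exact_mod_cast hb
  have hΓ : ∀ l : ℕ, 0 < Gamma (1 + z / b ^ l) := fun l =>
    Gamma_pos_of_pos (one_add_div_pos hz (one_le_pow₀ hb1.le))
  have hGamma := hasProd_of_hasSum_log (fun l => div_pos (pow_pos (hΓ _) _) (hΓ l))
    (hasSum_log_Gamma_ratio hb hz)
  have hdigits := hasProd_of_hasSum_log (fun n => pow_pos (div_pos (hn1 n) (hn2 n)) _)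
    ((hasSum_digitSum_mul_log_sub hb hz).congr_fun fun n => by
      rw [log_pow, log_div (hn1 n).ne' (hn2 n).ne'])
  rw [hGamma.tprod_eq, rpow_def_of_pos (by linarith), ← exp_add]
  convert hdigits using 2
  ring
end

section
/- Let b ≥ 2 be an integer and let z be a complex number with |z| < 1 and z ≠ 0. Then ∑_{n=1}^{∞} s_b(n)·z^n = (1/(1−z)) · ∑_{l=0}^{∞} (∑_{k=1}^{b−1} k·z^{k·b^l}) / (∑_{k=0}^{b−1} z^{k·b^l}); equivalently, the right-hand side equals (1/(1−z)) · ∑_{l=0}^{∞} (z^{b^l} − b·z^{b^{l+1}} + (b−1)·z^{(b+1)·b^l}) / ((1−z^{b^l})(1−z^{b^{l+1}})). In particular for b = 2: ∑_{n=1}^{∞} s_2(n)·z^n = (1/(1−z)) · ∑_{l=0}^{∞} z^{2^l}/(1 + z^{2^l}). -/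
/-!
Write `F(w) = ∑ s_b(n) wⁿ` (`digitSumGF`). Since `s_b(j + b m) = j + s_b(m)` for `j < b`,
splitting `F` into residue classes mod `b` gives the functional equation
`(1 - w) F(w) = R(w) + (1 - w^b) F(w^b)`, where `R(w) = (∑_{k<b} k wᵏ) / (∑_{k<b} wᵏ)`
(`digitRatio`).
Applied at `w = z^{b^l}`, the terms `R(z^{b^l})` telescope, and `‖(1 - w) F(w)‖ = O(‖w‖)` makes
the telescoping series absolutely convergent with sum `(1 - z) F(z)`.
-/

open Finset

theorem digitSum_add_mul {b : ℕ} (hb : 1 < b) {j : ℕ} (hj : j < b) (m : ℕ) :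
    digitSum b (j + b * m) = j + digitSum b m := by
  by_cases h : j = 0 ∧ m = 0
  · simp [h.1, h.2, digitSum]
  · rw [digitSum, Nat.digits_add b hb j m hj (by tauto), List.sum_cons, digitSum]

theorem tsum_eq_sum_range_tsum {G : Type*} [AddCommGroup G] [UniformSpace G]
    [IsUniformAddGroup G] [CompleteSpace G] [T0Space G] {f : ℕ → G} (hf : Summable f) {N : ℕ}
    (hN : N ≠ 0) : ∑' n, f n = ∑ j ∈ range N, ∑' m, f (j + N * m) := by
  obtain ⟨N, rfl⟩ := Nat.exists_eq_succ_of_ne_zero hN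
  rw [Nat.sumByResidueClasses hf (N + 1), sum_range]
  rfl

theorem hasSum_sub_succ {G : Type*} [AddCommGroup G] [TopologicalSpace G]
    [IsTopologicalAddGroup G] {g : ℕ → G} {a : G} (hg : HasSum g a) :
    HasSum (fun l ↦ g l - g (l + 1)) (g 0) := by
  have hsucc : HasSum (fun l ↦ g (l + 1)) (a - g 0) := by
    simpa [sum_range_one] using (hasSum_nat_add_iff' 1).mpr hg
  simpa using hg.sub hsucc

theorem norm_pow_lt_one {R : Type*} [SeminormedRing R] [NormOneClass R] {w : R} (hw : ‖w‖ < 1)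
    {n : ℕ} (hn : n ≠ 0) : ‖w ^ n‖ < 1 :=
  (norm_pow_le' w (Nat.pos_of_ne_zero hn)).trans_lt (pow_lt_one₀ (norm_nonneg w) hw hn)

section DigitRatio

variable {K : Type*} [Field K]

def digitRatio (b : ℕ) (w : K) : K :=
  (∑ k ∈ range b, (k : K) * w ^ k) / ∑ k ∈ range b, w ^ k

theorem digitRatio_pow_pow (b l : ℕ) (w : K) :
    digitRatio b (w ^ b ^ l) =
      (∑ k ∈ Icc 1 (b - 1), (k : K) * w ^ (k * b ^ l)) / ∑ k ∈ range b, w ^ (k * b ^ l) := by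
  have hIcc : Icc 1 (b - 1) = (range b).erase 0 := by ext; simp; omega
  have hzero : ((0 : ℕ) : K) * w ^ (0 * b ^ l) = 0 := by rw [Nat.cast_zero, zero_mul]
  simp_rw [digitRatio, hIcc, sum_erase (range b) (f := fun k : ℕ ↦ (k : K) * w ^ (k * b ^ l)) hzero,
    ← pow_mul, mul_comm (b ^ l)]

theorem sum_range_natCast_mul_pow_mul_one_sub_sq {R : Type*} [CommRing R] (n : ℕ) (w : R) :
    (∑ k ∈ range n, (k : R) * w ^ k) * (1 - w) ^ 2 = w - n * w ^ n + (n - 1) * w ^ (n + 1) := by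
  induction n with
  | zero => simp
  | succ n ih =>
    rw [sum_range_succ, add_mul, ih]
    push_cast
    ring

theorem sum_range_pow_ne_zero {b : ℕ} {w : K} (hwb : 1 - w ^ b ≠ 0) :
    ∑ k ∈ range b, w ^ k ≠ 0 := fun hS ↦ hwb (by rw [← mul_neg_geom_sum, hS, mul_zero])

theorem digitRatio_eq_div {b : ℕ} {w : K} (hwb : 1 - w ^ b ≠ 0) :
    digitRatio b w = (w - b * w ^ b + (b - 1) * w ^ (b + 1)) / ((1 - w) * (1 - w ^ b)) := by
  have hw : 1 - w ≠ 0 := fun hw ↦ hwb (by rw [← sub_eq_zero.mp hw, one_pow, sub_self])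
  rw [digitRatio, div_eq_div_iff (sum_range_pow_ne_zero hwb) (mul_ne_zero hw hwb)]
  linear_combination (∑ k ∈ range b, w ^ k) * sum_range_natCast_mul_pow_mul_one_sub_sq b w -
    (∑ k ∈ range b, (k : K) * w ^ k) * (1 - w) * mul_neg_geom_sum w b

end DigitRatio

section GeneratingFunction

variable {𝕜 : Type*} [NormedField 𝕜]

noncomputable def digitSumGF (b : ℕ) (w : 𝕜) : 𝕜 := ∑' n, (digitSum b n : 𝕜) * w ^ n

theorem norm_digitSum_mul_pow_le (b n : ℕ) (w : 𝕜) :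
    ‖(digitSum b n : 𝕜) * w ^ n‖ ≤ n * ‖w‖ ^ n := by
  rw [norm_mul, norm_pow]
  gcongr
  calc ‖(digitSum b n : 𝕜)‖ ≤ digitSum b n := by simpa using Nat.norm_cast_le (α := 𝕜) _
    _ ≤ n := by exact_mod_cast Nat.digit_sum_le b n

theorem norm_digitSumGF_le (b : ℕ) {r : ℝ} (hr : r < 1) {w : 𝕜} (hw : ‖w‖ ≤ r) :
    ‖digitSumGF b w‖ ≤ ‖w‖ / (1 - r) ^ 2 := by
  have hw1 : ‖w‖ < 1 := hw.trans_lt hr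
  calc ‖digitSumGF b w‖ ≤ ‖w‖ / (1 - ‖w‖) ^ 2 :=
        tsum_of_norm_bounded (hasSum_coe_mul_geometric_of_norm_lt_one (by simpa using hw1))
          (norm_digitSum_mul_pow_le b · w)
    _ ≤ ‖w‖ / (1 - r) ^ 2 := by gcongr

variable [CompleteSpace 𝕜]

theorem summable_digitSum_mul_pow (b : ℕ) {w : 𝕜} (hw : ‖w‖ < 1) :
    Summable fun n ↦ (digitSum b n : 𝕜) * w ^ n := by
  refine .of_norm_bounded ?_ (norm_digitSum_mul_pow_le b · w)
  exact (hasSum_coe_mul_geometric_of_norm_lt_one (by simpa using hw)).summable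

variable {b : ℕ}

theorem digitSumGF_eq (hb : 1 < b) {w : 𝕜} (hw : ‖w‖ < 1) :
    digitSumGF b w = (∑ j ∈ range b, (j : 𝕜) * w ^ j) / (1 - w ^ b) +
      (∑ j ∈ range b, w ^ j) * digitSumGF b (w ^ b) := by
  have hwb : ‖w ^ b‖ < 1 := norm_pow_lt_one hw (by omega)
  have hclass : ∀ j ∈ range b, ∑' m, (digitSum b (j + b * m) : 𝕜) * w ^ (j + b * m) =
      j * w ^ j / (1 - w ^ b) + w ^ j * digitSumGF b (w ^ b) := by
    intro j hj
    have hterm : ∀ m, (digitSum b (j + b * m) : 𝕜) * w ^ (j + b * m) =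
        j * w ^ j * (w ^ b) ^ m + w ^ j * ((digitSum b m : 𝕜) * (w ^ b) ^ m) := by
      intro m
      rw [digitSum_add_mul hb (mem_range.mp hj), pow_add, pow_mul]
      push_cast
      ring
    simp_rw [hterm]
    rw [((summable_geometric_of_norm_lt_one hwb).mul_left _).tsum_add
        ((summable_digitSum_mul_pow b hwb).mul_left _),
      tsum_mul_left, tsum_mul_left, tsum_geometric_of_norm_lt_one hwb, digitSumGF, div_eq_mul_inv]
  have hsum := summable_digitSum_mul_pow b hw
  refine ((tsum_eq_sum_range_tsum hsum (N := b) (by omega)).trans (sum_congr rfl hclass)).trans ?_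
  rw [sum_add_distrib, sum_div, sum_mul]

theorem one_sub_mul_digitSumGF (hb : 1 < b) {w : 𝕜} (hw : ‖w‖ < 1) :
    (1 - w) * digitSumGF b w = digitRatio b w + (1 - w ^ b) * digitSumGF b (w ^ b) := by
  have hwb : 1 - w ^ b ≠ 0 :=
    (isUnit_one_sub_of_norm_lt_one (norm_pow_lt_one hw (by omega))).ne_zero
  have hratio : digitRatio b w = (1 - w) * (∑ k ∈ range b, (k : 𝕜) * w ^ k) / (1 - w ^ b) := by
    rw [digitRatio, div_eq_div_iff (sum_range_pow_ne_zero hwb) hwb, ← mul_neg_geom_sum]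
    ring
  rw [digitSumGF_eq hb hw, hratio, mul_add, ← mul_assoc, mul_neg_geom_sum]
  ring

theorem summable_one_sub_mul_digitSumGF_pow_pow (hb : 1 < b) {z : 𝕜} (hz : ‖z‖ < 1) :
    Summable fun l : ℕ ↦ (1 - z ^ b ^ l) * digitSumGF b (z ^ b ^ l) := by
  refine .of_norm_bounded
    ((summable_geometric_of_lt_one (norm_nonneg z) hz).mul_left (2 / (1 - ‖z‖) ^ 2)) fun l ↦ ?_
  have hle : ∀ {m : ℕ}, m ≤ b ^ l → ‖z ^ b ^ l‖ ≤ ‖z‖ ^ m := fun hm ↦ by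
    rw [norm_pow]; exact pow_le_pow_of_le_one (norm_nonneg _) hz.le hm
  have hz1 : ‖z ^ b ^ l‖ ≤ ‖z‖ := by simpa using hle (Nat.one_le_pow _ _ (by omega))
  have hsub : ‖1 - z ^ b ^ l‖ ≤ 2 := by
    calc ‖1 - z ^ b ^ l‖ ≤ ‖(1 : 𝕜)‖ + ‖z ^ b ^ l‖ := norm_sub_le _ _
      _ ≤ 2 := by rw [norm_one]; linarith
  calc ‖(1 - z ^ b ^ l) * digitSumGF b (z ^ b ^ l)‖
      ≤ 2 * (‖z ^ b ^ l‖ / (1 - ‖z‖) ^ 2) := by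
        rw [norm_mul]
        exact mul_le_mul hsub (norm_digitSumGF_le b hz hz1) (norm_nonneg _) zero_le_two
    _ ≤ 2 * (‖z‖ ^ l / (1 - ‖z‖) ^ 2) := by gcongr; exact hle (Nat.lt_pow_self hb).le
    _ = 2 / (1 - ‖z‖) ^ 2 * ‖z‖ ^ l := by ring

theorem hasSum_digitRatio_pow_pow (hb : 1 < b) {z : 𝕜} (hz : ‖z‖ < 1) :
    HasSum (fun l : ℕ ↦ digitRatio b (z ^ b ^ l)) ((1 - z) * digitSumGF b z) := by
  have h := hasSum_sub_succ (summable_one_sub_mul_digitSumGF_pow_pow hb hz).hasSum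
  simp only [pow_zero, pow_one] at h
  refine h.congr_fun fun l ↦ ?_
  rw [one_sub_mul_digitSumGF hb (norm_pow_lt_one hz (by positivity)), ← pow_mul, ← pow_succ]
  ring

theorem tsum_digitSum_succ_mul_pow (hb : 1 < b) {z : 𝕜} (hz : ‖z‖ < 1) :
    ∑' n, (digitSum b (n + 1) : 𝕜) * z ^ (n + 1) =
      1 / (1 - z) * ∑' l, digitRatio b (z ^ b ^ l) := by
  rw [(hasSum_digitRatio_pow_pow hb hz).tsum_eq, one_div,
    inv_mul_cancel_left₀ (isUnit_one_sub_of_norm_lt_one hz).ne_zero, digitSumGF,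
    (summable_digitSum_mul_pow b hz).tsum_eq_zero_add]
  simp [digitSum]

end GeneratingFunction

theorem stmt12_general (b : ℕ) (hb : 2 ≤ b) (z : ℂ) (hz : ‖z‖ < 1) :
    (∑' n : ℕ, (digitSum b (n + 1) : ℂ) * z ^ (n + 1) =
      (1 / (1 - z)) * ∑' l : ℕ,
        (∑ k ∈ Finset.Icc 1 (b - 1), (k : ℂ) * z ^ (k * b ^ l)) /
          (∑ k ∈ Finset.range b, z ^ (k * b ^ l))) ∧
    ((1 / (1 - z)) * ∑' l : ℕ,
        (∑ k ∈ Finset.Icc 1 (b - 1), (k : ℂ) * z ^ (k * b ^ l)) /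
          (∑ k ∈ Finset.range b, z ^ (k * b ^ l)) =
      (1 / (1 - z)) * ∑' l : ℕ,
        (z ^ (b ^ l) - (b : ℂ) * z ^ (b ^ (l + 1)) + ((b : ℂ) - 1) * z ^ ((b + 1) * b ^ l)) /
          ((1 - z ^ (b ^ l)) * (1 - z ^ (b ^ (l + 1))))) ∧
    (∑' n : ℕ, (digitSum 2 (n + 1) : ℂ) * z ^ (n + 1) =
      (1 / (1 - z)) * ∑' l : ℕ, z ^ (2 ^ l) / (1 + z ^ (2 ^ l))) := by
  simp_rw [← digitRatio_pow_pow]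
  refine ⟨tsum_digitSum_succ_mul_pow hb hz, ?_, ?_⟩
  · congr 1
    refine tsum_congr fun l ↦ ?_
    have hzl : ‖(z ^ b ^ l) ^ b‖ < 1 :=
      norm_pow_lt_one (norm_pow_lt_one hz (by positivity)) (by omega)
    rw [digitRatio_eq_div (isUnit_one_sub_of_norm_lt_one hzl).ne_zero, ← pow_mul, ← pow_succ,
      ← pow_mul, mul_comm (b ^ l)]
  · rw [tsum_digitSum_succ_mul_pow Nat.one_lt_two hz]
    simp [digitRatio, sum_range_succ]

theorem stmt12 (b : ℕ) (hb : 2 ≤ b) (z : ℂ) (hz : ‖z‖ < 1) (hz0 : z ≠ 0) :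
    (∑' n : ℕ, (digitSum b (n + 1) : ℂ) * z ^ (n + 1) =
      (1 / (1 - z)) * ∑' l : ℕ,
        (∑ k ∈ Finset.Icc 1 (b - 1), (k : ℂ) * z ^ (k * b ^ l)) /
          (∑ k ∈ Finset.range b, z ^ (k * b ^ l))) ∧
    ((1 / (1 - z)) * ∑' l : ℕ,
        (∑ k ∈ Finset.Icc 1 (b - 1), (k : ℂ) * z ^ (k * b ^ l)) /
          (∑ k ∈ Finset.range b, z ^ (k * b ^ l)) =
      (1 / (1 - z)) * ∑' l : ℕ,
        (z ^ (b ^ l) - (b : ℂ) * z ^ (b ^ (l + 1)) + ((b : ℂ) - 1) * z ^ ((b + 1) * b ^ l)) /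
          ((1 - z ^ (b ^ l)) * (1 - z ^ (b ^ (l + 1))))) ∧
    (∑' n : ℕ, (digitSum 2 (n + 1) : ℂ) * z ^ (n + 1) =
      (1 / (1 - z)) * ∑' l : ℕ, z ^ (2 ^ l) / (1 + z ^ (2 ^ l))) :=
  stmt12_general b hb z hz
end

section
/- Let b ≥ 2 and p ≥ 1 be integers and let z be a complex number with |z| < 1. Then ∑_{n=1}^{b^p−1} s_b(n)·z^n = ((1 − z^{b^p})/(1−z)) · ∑_{l=0}^{p−1} (z^{b^l} − b·z^{b^{l+1}} + (b−1)·z^{(b+1)·b^l}) / ((1−z^{b^l})(1−z^{b^{l+1}})). In particular for b = 2: ∑_{n=1}^{2^p−1} s_2(n)·z^n = ((1 − z^{2^p})/(1−z)) · ∑_{l=0}^{p−1} z^{2^l}/(1 + z^{2^l}). -/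
open Finset

theorem digitSum_add_base_mul {b a : ℕ} (hb : 1 < b) (ha : a < b) (m : ℕ) :
    digitSum b (a + b * m) = a + digitSum b m := by
  by_cases h : a = 0 ∧ m = 0
  · obtain ⟨rfl, rfl⟩ := h
    simp [digitSum]
  · rw [digitSum, Nat.digits_add b hb a m ha (not_and_or.mp h), List.sum_cons, digitSum]

theorem sum_range_mul_eq_sum_sum {M : Type*} [AddCommMonoid M] (f : ℕ → M) (b N : ℕ) :
    ∑ n ∈ range (b * N), f n = ∑ m ∈ range N, ∑ a ∈ range b, f (a + b * m) := by
  induction N with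
  | zero => simp
  | succ N ih => rw [Nat.mul_succ, sum_range_add, ih, sum_range_succ]; simp only [add_comm]

section CommSemiring

variable {R : Type*} [CommSemiring R]

theorem geom_sum_base_pow_succ (b p : ℕ) (z : R) :
    ∑ n ∈ range (b ^ (p + 1)), z ^ n =
      (∑ a ∈ range b, z ^ a) * ∑ m ∈ range (b ^ p), (z ^ b) ^ m := by
  rw [pow_succ', sum_range_mul_eq_sum_sum, mul_sum]
  refine sum_congr rfl fun m _ => ?_
  simp only [pow_add, pow_mul, sum_mul]

theorem sum_digitSum_mul_pow_succ {b : ℕ} (hb : 1 < b) (p : ℕ) (z : R) :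
    ∑ n ∈ range (b ^ (p + 1)), (digitSum b n : R) * z ^ n =
      (∑ a ∈ range b, (a : R) * z ^ a) * ∑ m ∈ range (b ^ p), (z ^ b) ^ m +
        (∑ a ∈ range b, z ^ a) * ∑ m ∈ range (b ^ p), (digitSum b m : R) * (z ^ b) ^ m := by
  rw [pow_succ', sum_range_mul_eq_sum_sum, mul_sum, mul_sum, ← sum_add_distrib]
  refine sum_congr rfl fun m _ => ?_
  rw [sum_mul, sum_mul, ← sum_add_distrib]
  refine sum_congr rfl fun a ha => ?_
  rw [digitSum_add_base_mul hb (mem_range.mp ha), pow_add, pow_mul]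
  push_cast
  ring

end CommSemiring

section Field

variable {K : Type*} [Field K]

theorem geom_sum_eq_one_sub_div {x : K} (hx : x ≠ 1) (n : ℕ) :
    ∑ i ∈ range n, x ^ i = (1 - x ^ n) / (1 - x) :=
  eq_div_of_mul_eq (sub_ne_zero.mpr hx.symm) (geom_sum_mul_neg x n)

def digitTerm (b : ℕ) (w : K) : K :=
  (w - b * w ^ b + (b - 1) * w ^ (b + 1)) / ((1 - w) * (1 - w ^ b))

theorem sum_natCast_mul_pow_mul_one_sub_sq (w : K) (n : ℕ) :
    (∑ a ∈ range n, (a : K) * w ^ a) * (1 - w) ^ 2 =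
      w - n * w ^ n + (n - 1) * w ^ (n + 1) := by
  induction n with
  | zero => simp
  | succ n ih =>
    rw [sum_range_succ, add_mul, ih]
    push_cast
    ring

theorem sum_natCast_mul_pow_eq_digitTerm_mul {w : K} (hw : w ≠ 1) (b : ℕ) (hwb : w ^ b ≠ 1) :
    ∑ a ∈ range b, (a : K) * w ^ a = digitTerm b w * ∑ a ∈ range b, w ^ a := by
  have h1 : 1 - w ≠ 0 := sub_ne_zero.mpr hw.symm
  have hb : 1 - w ^ b ≠ 0 := sub_ne_zero.mpr hwb.symm
  rw [digitTerm, div_mul_eq_mul_div, eq_div_iff (mul_ne_zero h1 hb)]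
  linear_combination (∑ a ∈ range b, w ^ a) * sum_natCast_mul_pow_mul_one_sub_sq w b -
    (∑ a ∈ range b, (a : K) * w ^ a) * (1 - w) * geom_sum_mul_neg w b

theorem sum_digitSum_mul_pow_eq {b : ℕ} (hb : 1 < b) (p : ℕ) {z : K}
    (hz : ∀ l ≤ p, z ^ b ^ l ≠ 1) :
    ∑ n ∈ range (b ^ p), (digitSum b n : K) * z ^ n =
      (∑ n ∈ range (b ^ p), z ^ n) * ∑ l ∈ range p, digitTerm b (z ^ b ^ l) := by
  induction p generalizing z with
  | zero => simp [digitSum]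
  | succ p ih =>
    have hzb : ∀ l ≤ p, (z ^ b) ^ b ^ l ≠ 1 := fun l hl => by
      rw [← pow_mul, ← pow_succ']; exact hz (l + 1) (by omega)
    rw [sum_digitSum_mul_pow_succ hb, ih hzb, geom_sum_base_pow_succ, sum_range_succ',
      sum_natCast_mul_pow_eq_digitTerm_mul (by simpa using hz 0 (by omega)) b
        (by simpa using hz 1 (by omega))]
    simp only [← pow_mul, ← pow_succ', pow_zero, pow_one]
    ring

theorem digitTerm_two {w : K} (hw : w ≠ 1) (hw' : w ≠ -1) : digitTerm 2 w = w / (1 + w) := by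
  have h1 : 1 - w ≠ 0 := sub_ne_zero.mpr hw.symm
  have h2 : 1 + w ≠ 0 := by rwa [add_comm, ← sub_neg_eq_add, sub_ne_zero]
  have h3 : 1 - w ^ 2 ≠ 0 := by
    rw [show (1 : K) - w ^ 2 = (1 - w) * (1 + w) by ring]; exact mul_ne_zero h1 h2
  rw [digitTerm, div_eq_div_iff (mul_ne_zero h1 h3) h2]
  push_cast
  ring

end Field

theorem sum_Icc_one_sub_one_eq_sum_range {M : Type*} [AddCommMonoid M] {f : ℕ → M} (h0 : f 0 = 0)
    (N : ℕ) : ∑ n ∈ Icc 1 (N - 1), f n = ∑ n ∈ range N, f n := by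
  rcases N with _ | N
  · simp
  · rw [sum_range_eq_add_Ico f (Nat.succ_pos N), h0, zero_add, Nat.add_sub_cancel]
    rfl

theorem stmt13_general (b p : ℕ) (hb : 2 ≤ b) (z : ℂ) (hz : ‖z‖ < 1) :
    (∑ n ∈ Finset.Icc 1 (b ^ p - 1), (digitSum b n : ℂ) * z ^ n =
      ((1 - z ^ (b ^ p)) / (1 - z)) * ∑ l ∈ Finset.range p,
        (z ^ (b ^ l) - (b : ℂ) * z ^ (b ^ (l + 1)) + ((b : ℂ) - 1) * z ^ ((b + 1) * b ^ l)) /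
          ((1 - z ^ (b ^ l)) * (1 - z ^ (b ^ (l + 1))))) ∧
    (∑ n ∈ Finset.Icc 1 (2 ^ p - 1), (digitSum 2 n : ℂ) * z ^ n =
      ((1 - z ^ (2 ^ p)) / (1 - z)) * ∑ l ∈ Finset.range p,
        z ^ (2 ^ l) / (1 + z ^ (2 ^ l))) := by
  have norm_pow_lt_one {k : ℕ} (hk : k ≠ 0) : ‖z ^ k‖ < 1 := by
    rw [norm_pow]; exact pow_lt_one₀ (norm_nonneg z) hz hk
  have ne_one {k : ℕ} (hk : k ≠ 0) : z ^ k ≠ 1 := fun h => by simpa [h] using norm_pow_lt_one hk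
  have ne_neg_one {k : ℕ} (hk : k ≠ 0) : z ^ k ≠ -1 := fun h => by
    simpa [h] using norm_pow_lt_one hk
  have generating_function (c : ℕ) (hc : 1 < c) :
      ∑ n ∈ Icc 1 (c ^ p - 1), (digitSum c n : ℂ) * z ^ n =
        (1 - z ^ c ^ p) / (1 - z) * ∑ l ∈ range p, digitTerm c (z ^ c ^ l) := by
    rw [sum_Icc_one_sub_one_eq_sum_range (by simp [digitSum]),
      sum_digitSum_mul_pow_eq hc p fun l _ => ne_one (by positivity),
      geom_sum_eq_one_sub_div (by simpa using ne_one one_ne_zero)]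
  refine ⟨?_, ?_⟩
  · rw [generating_function b hb]
    congr 1
    refine sum_congr rfl fun l _ => ?_
    rw [digitTerm, ← pow_mul, ← pow_mul, ← pow_succ, mul_comm (b ^ l)]
  · rw [generating_function 2 one_lt_two]
    congr 1
    exact sum_congr rfl fun l _ =>
      digitTerm_two (ne_one (by positivity)) (ne_neg_one (by positivity))

theorem stmt13 (b p : ℕ) (hb : 2 ≤ b) (hp : 1 ≤ p) (z : ℂ) (hz : ‖z‖ < 1) :
    (∑ n ∈ Finset.Icc 1 (b ^ p - 1), (digitSum b n : ℂ) * z ^ n =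
      ((1 - z ^ (b ^ p)) / (1 - z)) * ∑ l ∈ Finset.range p,
        (z ^ (b ^ l) - (b : ℂ) * z ^ (b ^ (l + 1)) + ((b : ℂ) - 1) * z ^ ((b + 1) * b ^ l)) /
          ((1 - z ^ (b ^ l)) * (1 - z ^ (b ^ (l + 1))))) ∧
    (∑ n ∈ Finset.Icc 1 (2 ^ p - 1), (digitSum 2 n : ℂ) * z ^ n =
      ((1 - z ^ (2 ^ p)) / (1 - z)) * ∑ l ∈ Finset.range p,
        z ^ (2 ^ l) / (1 + z ^ (2 ^ l))) :=
  stmt13_general b p hb z hz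
end

section
/- Define, for a positive integer n, c_n = μ(n) if n is odd, and c_n = 2^{ν_2(n)−1}·μ(n/2^{ν_2(n)}) if n is even, where μ is the Möbius function and ν_2 is the 2-adic valuation. Then, for every integer n ≥ 1, ∑_{d | n} c_{n/d}·(s_2(d) − s_2(d−1)) equals 1 if n is a power of 2, and equals 0 otherwise. -/
open scoped Classical

/-- The sequence `c_n`: `μ(n)` for odd `n`, and `2^(ν₂(n)-1)·μ(n/2^(ν₂(n)))` for even `n`. -/
def cSeq (n : ℕ) : ℤ :=
  if Odd n then ArithmeticFunction.moebius n
  else 2 ^ (padicValNat 2 n - 1) * ArithmeticFunction.moebius (n / 2 ^ padicValNat 2 n)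

/-!
Legendre's formula `ν₂(d!) = d - s₂(d)` turns `s₂(d) - s₂(d - 1)` into `1 - ν₂(d)`. Writing
`n = 2^a m` with `m` odd, both `c` and `1 - ν₂` split along the coprime factors `2^a` and `m`, so
the divisor sum factors as `(∑_{i ≤ a} c(2^(a-i)) (1 - i)) · ∑_{e ∣ m} μ(e)`; the first factor
is `1` for every `a`, and the second is `[m = 1]`.
-/

open Finset ArithmeticFunction
open scoped Nat ArithmeticFunction.Moebius

lemma padicValNat_two_factorial_add_s2 (n : ℕ) : padicValNat 2 n ! + s2 n = n := by
  have := sub_one_mul_padicValNat_factorial (p := 2) n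
  have := Nat.digit_sum_le 2 n
  simp only [Nat.add_one_sub_one, one_mul] at *
  unfold s2
  omega

lemma s2_sub_s2_pred {d : ℕ} (hd : d ≠ 0) :
    (s2 d : ℤ) - s2 (d - 1) = 1 - padicValNat 2 d := by
  obtain ⟨n, rfl⟩ := Nat.exists_eq_succ_of_ne_zero hd
  have hfac : padicValNat 2 (n + 1)! = padicValNat 2 (n + 1) + padicValNat 2 n ! := by
    rw [Nat.factorial_succ, padicValNat.mul n.succ_ne_zero n.factorial_ne_zero]
  have := padicValNat_two_factorial_add_s2 n
  have := padicValNat_two_factorial_add_s2 (n + 1)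
  simp only [Nat.succ_eq_add_one, Nat.add_one_sub_one]
  omega

lemma padicValNat_two_pow_mul_of_odd (k : ℕ) {e : ℕ} (he : Odd e) :
    padicValNat 2 (2 ^ k * e) = k := by
  rw [padicValNat.mul (by positivity) he.pos.ne', padicValNat.prime_pow,
    padicValNat.eq_zero_of_not_dvd he.not_two_dvd_nat, add_zero]

lemma cSeq_one : cSeq 1 = 1 := by simp [cSeq]

lemma cSeq_two_pow_succ_mul_of_odd (k : ℕ) {e : ℕ} (he : Odd e) :
    cSeq (2 ^ (k + 1) * e) = 2 ^ k * μ e := by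
  have heven : ¬Odd (2 ^ (k + 1) * e) := by
    rw [Nat.not_odd_iff_even, Nat.even_mul]
    exact Or.inl ((Nat.even_pow' k.succ_ne_zero).mpr even_two)
  rw [cSeq, if_neg heven, padicValNat_two_pow_mul_of_odd _ he, Nat.add_one_sub_one,
    Nat.mul_div_cancel_left _ (by positivity)]

lemma cSeq_two_pow_mul_of_odd (k : ℕ) {e : ℕ} (he : Odd e) :
    cSeq (2 ^ k * e) = cSeq (2 ^ k) * μ e := by
  cases k with
  | zero => simp [cSeq, he]
  | succ k =>
    rw [cSeq_two_pow_succ_mul_of_odd k he, ← mul_one (2 ^ (k + 1)),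
      cSeq_two_pow_succ_mul_of_odd k odd_one, moebius_apply_one, mul_one]

lemma sum_range_two_pow_sub_mul_one_sub (b : ℕ) :
    ∑ i ∈ range (b + 1), (2 : ℤ) ^ (b - i) * (1 - i) = b + 1 := by
  induction b with
  | zero => simp
  | succ b ih =>
    have hdouble : ∑ i ∈ range (b + 1), (2 : ℤ) ^ (b + 1 - i) * (1 - i) = 2 * (b + 1) := by
      rw [← ih, mul_sum]
      refine sum_congr rfl fun i hi => ?_
      rw [Nat.sub_add_comm (Nat.lt_succ_iff.mp (mem_range.mp hi)), pow_succ]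
      ring
    rw [sum_range_succ, hdouble, Nat.sub_self, pow_zero]
    push_cast
    ring

lemma sum_range_cSeq_two_pow_sub_mul_one_sub (a : ℕ) :
    ∑ i ∈ range (a + 1), cSeq (2 ^ (a - i)) * (1 - i) = 1 := by
  cases a with
  | zero => simp [cSeq_one]
  | succ b =>
    have hcSeq : ∀ i ∈ range (b + 1), cSeq (2 ^ (b + 1 - i)) = 2 ^ (b - i) := fun i hi => by
      rw [Nat.sub_add_comm (Nat.lt_succ_iff.mp (mem_range.mp hi)), ← mul_one (2 ^ _),
        cSeq_two_pow_succ_mul_of_odd _ odd_one, moebius_apply_one, mul_one]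
    rw [sum_range_succ, sum_congr rfl fun i hi => by rw [hcSeq i hi],
      sum_range_two_pow_sub_mul_one_sub, Nat.sub_self, pow_zero, cSeq_one]
    push_cast
    ring

lemma sum_divisors_moebius (n : ℕ) : ∑ d ∈ n.divisors, (μ d : ℤ) = if n = 1 then 1 else 0 := by
  rw [← coe_mul_zeta_apply, moebius_mul_coe_zeta, one_apply]

lemma Nat.Coprime.sum_divisors_mul_eq_sum_sum {M : Type*} [AddCommMonoid M] {m n : ℕ}
    (hmn : m.Coprime n) (f : ℕ → M) :
    ∑ d ∈ (m * n).divisors, f d = ∑ x ∈ m.divisors, ∑ y ∈ n.divisors, f (x * y) := by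
  rw [hmn.divisors_mul, sum_map, ← sum_product']
  exact sum_attach _ fun p : ℕ × ℕ => f (p.1 * p.2)

lemma sum_divisors_two_pow_mul_of_odd {M : Type*} [AddCommMonoid M] (a : ℕ) {m : ℕ}
    (hm : Odd m) (f : ℕ → M) :
    ∑ d ∈ (2 ^ a * m).divisors, f d = ∑ i ∈ range (a + 1), ∑ e ∈ m.divisors, f (2 ^ i * e) := by
  rw [((Nat.coprime_two_left.mpr hm).pow_left a).sum_divisors_mul_eq_sum_sum,
    Nat.sum_divisors_prime_pow Nat.prime_two]

lemma odd_two_pow_mul_eq_two_pow_iff {a m : ℕ} (hm : Odd m) :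
    (∃ l, 2 ^ a * m = 2 ^ l) ↔ m = 1 := by
  refine ⟨fun ⟨l, hl⟩ => ?_, fun h => ⟨a, by rw [h, mul_one]⟩⟩
  exact ((Nat.coprime_two_right.mpr hm).pow_right l).eq_one_of_dvd (hl ▸ dvd_mul_left m _)

theorem stmt15 (n : ℕ) (hn : 1 ≤ n) :
    ∑ d ∈ n.divisors, cSeq (n / d) * ((s2 d : ℤ) - s2 (d - 1)) =
      if ∃ l : ℕ, n = 2 ^ l then 1 else 0 := by
  obtain ⟨a, m, hm, rfl⟩ := Nat.exists_eq_two_pow_mul_odd (Nat.one_le_iff_ne_zero.mp hn)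
  have hterm : ∀ i ∈ range (a + 1), ∀ e ∈ m.divisors,
      cSeq (2 ^ a * m / (2 ^ i * e)) * ((s2 (2 ^ i * e) : ℤ) - s2 (2 ^ i * e - 1)) =
        cSeq (2 ^ (a - i)) * (1 - i) * μ (m / e) := by
    intro i hi e he
    have hia : i ≤ a := Nat.lt_succ_iff.mp (mem_range.mp hi)
    have he_dvd := Nat.dvd_of_mem_divisors he
    have he_odd : Odd e := hm.of_dvd_nat he_dvd
    have hdiv : 2 ^ a * m / (2 ^ i * e) = 2 ^ (a - i) * (m / e) := by
      rw [← Nat.div_mul_div_comm (Nat.pow_dvd_pow 2 hia) he_dvd, Nat.pow_div hia two_pos]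
    rw [hdiv, cSeq_two_pow_mul_of_odd _ (hm.of_dvd_nat (Nat.div_dvd_of_dvd he_dvd)),
      s2_sub_s2_pred (mul_ne_zero (by positivity) he_odd.pos.ne'),
      padicValNat_two_pow_mul_of_odd i he_odd]
    ring
  rw [sum_divisors_two_pow_mul_of_odd a hm, sum_congr rfl fun i hi => sum_congr rfl (hterm i hi),
    ← sum_mul_sum, sum_range_cSeq_two_pow_sub_mul_one_sub, one_mul, Nat.sum_div_divisors,
    sum_divisors_moebius, if_congr (odd_two_pow_mul_eq_two_pow_iff (a := a) hm).symm rfl rfl]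
end

section
/- Let N ≥ 1 be an integer, let f : ℝ → ℝ be an arbitrary function, and let x be real. For k ≥ 0 let α_k denote the coefficient of X^k in the polynomial ∏_{i=0}^{N−2} (1 + X^{2^i})^{N−1−i} (interpreted as the constant polynomial 1 when N = 1). Then ∑_{n=0}^{2^N−1} (−1)^{s_2(n)}·f(x+n) = (−1)^N · ∑_{k=0}^{2^N−N−1} α_k · Δ^N f(x+k), where Δ^N f(y) = ∑_{l=0}^{N} C(N,l)·(−1)^{N−l}·f(y+l) is the N-th iterated forward difference with step 1. -/
/-!
The Thue–Morse signs are the coefficients of `∏_{i<N} (1 - X^{2^i})`. Since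
`X^{2^i} - 1 = (X - 1) ∏_{j<i} (1 + X^{2^j})`, this product equals `(-1)^N (X - 1)^N P` with `P`
the polynomial whose coefficients are the `α k`. Pairing the coefficients of a polynomial with
the sequence `n ↦ f (x + n)` turns multiplication by `X^k` into a shift by `k`, hence
multiplication by `(X - 1)^N` into the `N`-th forward difference.
-/

open Polynomial Finset

lemma s2_eq_mod_two_add_s2_div_two (n : ℕ) : s2 n = n % 2 + s2 (n / 2) := by
  rcases eq_or_ne n 0 with rfl | hn
  · simp [s2]
  · simp [s2, Nat.digits_def' one_lt_two (Nat.pos_of_ne_zero hn)]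

lemma s2_two_pow_add {N n : ℕ} (hn : n < 2 ^ N) : s2 (2 ^ N + n) = s2 n + 1 := by
  induction N generalizing n with
  | zero => simp [Nat.lt_one_iff.mp hn, s2]
  | succ N ih =>
    rw [s2_eq_mod_two_add_s2_div_two, s2_eq_mod_two_add_s2_div_two n, pow_succ,
      show (2 ^ N * 2 + n) / 2 = 2 ^ N + n / 2 by omega, ih (by omega)]
    omega

lemma prod_range_prod_range_eq_prod_pow {M : Type*} [CommMonoid M] (a : ℕ → M) (N : ℕ) :
    ∏ i ∈ range N, ∏ j ∈ range i, a j = ∏ j ∈ range (N - 1), a j ^ (N - 1 - j) := by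
  induction N with
  | zero => simp
  | succ N ih =>
    rw [prod_range_succ, ih]
    cases N with
    | zero => simp
    | succ M =>
      simp only [Nat.add_sub_cancel]
      rw [prod_range_succ _ M, prod_range_succ _ M, ← mul_assoc, ← prod_mul_distrib]
      congr 1
      · refine prod_congr rfl fun j hj => ?_
        rw [← pow_succ, show M - j + 1 = M + 1 - j by have := mem_range.mp hj; omega]
      · simp

section ThueMorse

variable {R : Type*} [CommRing R]

theorem prod_one_sub_X_pow_two_pow_eq_sum (N : ℕ) :
    ∏ i ∈ range N, (1 - X ^ 2 ^ i : R[X]) =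
      ∑ n ∈ range (2 ^ N), C ((-1) ^ s2 n) * X ^ n := by
  induction N with
  | zero => simp [s2]
  | succ N ih =>
    rw [prod_range_succ, ih, pow_succ, mul_two, sum_range_add, mul_one_sub, sum_mul,
      sub_eq_add_neg, ← sum_neg_distrib]
    congr 1
    refine sum_congr rfl fun n hn => ?_
    rw [s2_two_pow_add (mem_range.mp hn), pow_succ, C_mul, pow_add]
    simp only [map_neg, map_one]
    ring

theorem prod_X_pow_two_pow_sub_one_eq_mul (N : ℕ) :
    ∏ i ∈ range N, (X ^ 2 ^ i - 1 : R[X]) =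
      (X - 1) ^ N * ∏ i ∈ range (N - 1), (1 + X ^ 2 ^ i) ^ (N - 1 - i) := by
  have telescope (i : ℕ) :
      (X ^ 2 ^ i - 1 : R[X]) = (X - 1) * ∏ j ∈ range i, (1 + X ^ 2 ^ j) := by
    simpa [mul_comm, add_comm] using pow_two_pow_sub_pow_two_pow (x := (X : R[X])) (y := 1) i
  simp_rw [telescope, prod_mul_distrib, prod_const, card_range, prod_range_prod_range_eq_prod_pow]

theorem natDegree_prod_one_add_X_pow_two_pow_lt [Nontrivial R] (N : ℕ) :
    (∏ i ∈ range (N - 1), (1 + X ^ 2 ^ i : R[X]) ^ (N - 1 - i)).natDegree < 2 ^ N - N := by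
  have monic_X_pow_sub_one {k : ℕ} (hk : k ≠ 0) : (X ^ k - 1 : R[X]).Monic := by
    simpa using monic_X_pow_sub_C (1 : R) hk
  have natDegree_X_pow_sub_one (k : ℕ) : (X ^ k - 1 : R[X]).natDegree = k := by
    simpa using natDegree_X_pow_sub_C (n := k) (r := (1 : R))
  have monic_one_add (i : ℕ) : (1 + X ^ 2 ^ i : R[X]).Monic := by
    simpa [add_comm] using monic_X_pow_add_C (1 : R) (pow_ne_zero i two_ne_zero)
  have monic_X_sub_one : (X - 1 : R[X]).Monic := by simpa using monic_X_pow_sub_one one_ne_zero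
  have hdeg := congrArg natDegree (prod_X_pow_two_pow_sub_one_eq_mul (R := R) N)
  rw [natDegree_prod_of_monic _ _ fun i _ => monic_X_pow_sub_one (pow_ne_zero i two_ne_zero),
    (monic_X_sub_one.pow N).natDegree_mul
      (monic_prod_of_monic _ _ fun i _ => (monic_one_add i).pow _)] at hdeg
  simp only [natDegree_X_pow_sub_one, monic_X_sub_one.natDegree_pow, Nat.geomSum_eq le_rfl,
    by simpa using natDegree_X_pow_sub_one 1] at hdeg
  have := N.one_le_two_pow
  omega

end ThueMorse

section Pairing

variable {R M : Type*} [Semiring R] [AddCommMonoid M] [Module R M]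

def coeffPairing (g : ℕ → M) : R[X] →ₗ[R] M :=
  lsum fun n => LinearMap.toSpanSingleton R M (g n)

lemma coeffPairing_apply (g : ℕ → M) (p : R[X]) :
    coeffPairing g p = p.sum fun n a => a • g n := rfl

@[simp]
lemma coeffPairing_monomial (g : ℕ → M) (n : ℕ) (a : R) :
    coeffPairing g (monomial n a) = a • g n := by
  simp [coeffPairing_apply]

lemma coeffPairing_eq_sum_range (g : ℕ → M) {p : R[X]} {m : ℕ} (hp : p.natDegree < m) :
    coeffPairing g p = ∑ n ∈ range m, p.coeff n • g n :=
  sum_over_range' p (fun n => zero_smul R (g n)) m hp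

lemma coeffPairing_monomial_mul (g : ℕ → M) (k : ℕ) (a : R) (q : R[X]) :
    coeffPairing g (monomial k a * q) = a • coeffPairing (fun l => g (k + l)) q := by
  induction q using Polynomial.induction_on' with
  | add p q hp hq => rw [mul_add, map_add, map_add, hp, hq, smul_add]
  | monomial l b =>
    rw [monomial_mul_monomial, coeffPairing_monomial, coeffPairing_monomial, mul_smul]

lemma coeffPairing_mul (g : ℕ → M) (p q : R[X]) :
    coeffPairing g (p * q) = coeffPairing (fun k => coeffPairing (fun l => g (k + l)) q) p := by
  induction p using Polynomial.induction_on' with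
  | add p p' hp hp' => rw [add_mul, map_add, map_add, hp, hp']
  | monomial k a => rw [coeffPairing_monomial_mul, coeffPairing_monomial]

end Pairing

lemma coeffPairing_X_sub_one_pow {R M : Type*} [CommRing R] [AddCommGroup M] [Module R M]
    (g : ℕ → M) (N : ℕ) :
    coeffPairing g ((X - 1 : R[X]) ^ N) =
      ∑ l ∈ range (N + 1), ((N.choose l : R) * (-1) ^ (N - l)) • g l := by
  rw [coeffPairing_eq_sum_range g (m := N + 1)]
  · refine sum_congr rfl fun l _ => ?_
    rw [sub_eq_add_neg, ← C_1, ← C_neg, coeff_X_add_C_pow, mul_comm ((-1 : R) ^ (N - l))]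
  · exact (natDegree_pow_le_of_le N (by simpa using natDegree_X_sub_C_le (1 : R))).trans_lt
      (by simp)

theorem stmt16_general (N : ℕ) (f : ℝ → ℝ) (x : ℝ) (α : ℕ → ℝ)
    (hα : ∀ k : ℕ, α k =
      ((∏ i ∈ Finset.range (N - 1),
          ((1 : Polynomial ℤ) + Polynomial.X ^ (2 ^ i)) ^ (N - 1 - i)).coeff k : ℝ)) :
    ∑ n ∈ Finset.range (2 ^ N), (-1 : ℝ) ^ s2 n * f (x + n) =
    (-1 : ℝ) ^ N * ∑ k ∈ Finset.range (2 ^ N - N), α k *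
      ∑ l ∈ Finset.range (N + 1), (N.choose l : ℝ) * (-1 : ℝ) ^ (N - l) * f (x + k + l) := by
  let P : ℝ[X] := ∏ i ∈ range (N - 1), (1 + X ^ 2 ^ i) ^ (N - 1 - i)
  have hαP (k : ℕ) : α k = P.coeff k := by
    have hP : (∏ i ∈ range (N - 1), (1 + X ^ 2 ^ i : ℤ[X]) ^ (N - 1 - i)).map
        (Int.castRingHom ℝ) = P := by
      simp [P, Polynomial.map_prod]
    rw [hα, ← hP, coeff_map, eq_intCast]
  let g : ℕ → ℝ := fun n => f (x + n)
  have hsign : ∏ i ∈ range N, (1 - X ^ 2 ^ i : ℝ[X]) =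
      (-1 : ℝ) ^ N • ∏ i ∈ range N, (X ^ 2 ^ i - 1) := by
    rw [prod_congr rfl fun i _ => (neg_sub (X ^ 2 ^ i) 1).symm, prod_neg, card_range,
      smul_eq_C_mul, map_pow, map_neg, map_one]
  calc ∑ n ∈ range (2 ^ N), (-1 : ℝ) ^ s2 n * f (x + n)
      = coeffPairing g (∏ i ∈ range N, (1 - X ^ 2 ^ i : ℝ[X])) := by
        rw [prod_one_sub_X_pow_two_pow_eq_sum, map_sum]
        simp only [C_mul_X_pow_eq_monomial, coeffPairing_monomial, smul_eq_mul, g]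
    _ = (-1) ^ N * coeffPairing g (P * (X - 1) ^ N) := by
        rw [hsign, map_smul, prod_X_pow_two_pow_sub_one_eq_mul, mul_comm, smul_eq_mul]
    _ = _ := by
        rw [coeffPairing_mul,
          coeffPairing_eq_sum_range _ (natDegree_prod_one_add_X_pow_two_pow_lt N)]
        simp [coeffPairing_X_sub_one_pow, hαP, g, P, add_assoc]

theorem stmt16 (N : ℕ) (hN : 1 ≤ N) (f : ℝ → ℝ) (x : ℝ) (α : ℕ → ℝ)
    (hα : ∀ k : ℕ, α k =
      ((∏ i ∈ Finset.range (N - 1),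
          ((1 : Polynomial ℤ) + Polynomial.X ^ (2 ^ i)) ^ (N - 1 - i)).coeff k : ℝ)) :
    ∑ n ∈ Finset.range (2 ^ N), (-1 : ℝ) ^ s2 n * f (x + n) =
    (-1 : ℝ) ^ N * ∑ k ∈ Finset.range (2 ^ N - N), α k *
      ∑ l ∈ Finset.range (N + 1), (N.choose l : ℝ) * (-1 : ℝ) ^ (N - l) * f (x + k + l) :=
  stmt16_general N f x α hα
end

section
/- Let b ≥ 2 be an integer and let f : ℕ → ℝ be a function such that ∑_{n=1}^{∞} s_b(n)·|f(n)| < ∞ and ∑_{n=1}^{∞} |f(n)| < ∞. Then ∑_{n=1}^{∞} s_b(n)·( f(n) − ∑_{j=0}^{b−1} f(bn+j) ) = ∑_{j=1}^{b−1} j · ∑_{n=0}^{∞} f(bn+j). -/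
open Finset

theorem HasSum.sum_range_mul_add {α : Type*} [AddCommMonoid α] [TopologicalSpace α]
    [ContinuousAdd α] [RegularSpace α] {g : ℕ → α} {a : α} (hg : HasSum g a) {b : ℕ}
    (hb : 0 < b) : HasSum (fun n => ∑ j ∈ range b, g (b * n + j)) a := by
  have : NeZero b := ⟨hb.ne'⟩
  refine ((Nat.divModEquiv b).symm.hasSum_iff.mpr hg).prod_fiberwise fun n => ?_
  simpa [Fin.sum_univ_eq_sum_range (fun j => g (b * n + j)), mul_comm]
    using hasSum_fintype (fun j : Fin b => g (n * b + j))

theorem digitSum_mul_add {b : ℕ} (hb : 1 < b) (n : ℕ) {j : ℕ} (hj : j < b) :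
    digitSum b (b * n + j) = digitSum b n + j := by
  rcases eq_or_ne j 0 with rfl | hj0
  · rcases eq_or_ne n 0 with rfl | hn0
    · simp [digitSum]
    · rw [digitSum, add_comm, Nat.digits_add b hb 0 n hj (Or.inr hn0)]
      simp [digitSum]
  · rw [digitSum, add_comm, Nat.digits_add b hb j n hj (Or.inl hj0), List.sum_cons, digitSum,
      add_comm]

theorem one_le_digitSum (b : ℕ) {n : ℕ} (hn : n ≠ 0) : 1 ≤ digitSum b n :=
  Nat.one_le_iff_ne_zero.mpr fun h => Nat.getLast_digit_ne_zero b hn <|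
    List.sum_eq_zero_iff.mp h _ (List.getLast_mem _)

theorem digitSum_mul_sub_sum_range {b : ℕ} (hb : 1 < b) (f : ℕ → ℝ) (n : ℕ) :
    (digitSum b n : ℝ) * (f n - ∑ j ∈ range b, f (b * n + j)) =
      (digitSum b n : ℝ) * f n - ∑ j ∈ range b, (digitSum b (b * n + j) : ℝ) * f (b * n + j) +
        ∑ j ∈ range b, (j : ℝ) * f (b * n + j) := by
  rw [mul_sub, mul_sum, sub_add, ← sum_sub_distrib]
  congr 1
  refine sum_congr rfl fun j hj => ?_
  rw [digitSum_mul_add hb n (mem_range.mp hj)]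
  push_cast
  ring

theorem hasSum_digitSum_mul_sub_sum_range {b : ℕ} (hb : 1 < b) {f : ℕ → ℝ}
    (hF : Summable fun m => (digitSum b m : ℝ) * f m) (hf : Summable f) :
    HasSum (fun n => (digitSum b n : ℝ) * (f n - ∑ j ∈ range b, f (b * n + j)))
      (∑ j ∈ range b, (j : ℝ) * ∑' n, f (b * n + j)) := by
  have hblocks := hF.hasSum.sum_range_mul_add (by omega : 0 < b)
  have hresidues (j : ℕ) : HasSum (fun n => (j : ℝ) * f (b * n + j)) (j * ∑' n, f (b * n + j)) :=
    (hf.comp_injective fun m n h =>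
      Nat.eq_of_mul_eq_mul_left (by omega) (Nat.add_right_cancel h)).hasSum.mul_left _
  have hsum := (hF.hasSum.sub hblocks).add (hasSum_sum fun j (_ : j ∈ range b) => hresidues j)
  rw [sub_self, zero_add] at hsum
  simpa only [digitSum_mul_sub_sum_range hb f] using hsum

theorem stmt18_general (b : ℕ) (hb : 2 ≤ b) (f : ℕ → ℝ)
    (h1 : Summable (fun n : ℕ => (digitSum b (n + 1) : ℝ) * |f (n + 1)|)) :
    ∑' n : ℕ, (digitSum b (n + 1) : ℝ) *
        (f (n + 1) - ∑ j ∈ Finset.range b, f (b * (n + 1) + j)) =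
    ∑ j ∈ Finset.Icc 1 (b - 1), (j : ℝ) * ∑' n : ℕ, f (b * n + j) := by
  have hF : Summable fun m => (digitSum b m : ℝ) * f m :=
    (summable_nat_add_iff 1).mp <| Summable.of_abs <| h1.congr fun n => by
      rw [abs_mul, Nat.abs_cast]
  have hf : Summable f :=
    (summable_nat_add_iff 1).mp <| Summable.of_abs <|
      h1.of_nonneg_of_le (fun _ => abs_nonneg _) fun n => le_mul_of_one_le_left (abs_nonneg _)
        (mod_cast one_le_digitSum b n.succ_ne_zero)
  have hsum := (hasSum_nat_add_iff' 1).mpr (hasSum_digitSum_mul_sub_sum_range hb hF hf)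
  have hzero : digitSum b 0 = 0 := by simp [digitSum]
  simp only [range_one, sum_singleton, hzero, Nat.cast_zero, zero_mul, sub_zero] at hsum
  rw [hsum.tsum_eq, Nat.range_eq_Icc_zero_sub_one b (by omega),
    ← add_sum_Ioc_eq_sum_Icc (Nat.zero_le _), ← Icc_add_one_left_eq_Ioc]
  simp

theorem stmt18 (b : ℕ) (hb : 2 ≤ b) (f : ℕ → ℝ)
    (h1 : Summable (fun n : ℕ => (digitSum b (n + 1) : ℝ) * |f (n + 1)|))
    (h2 : Summable (fun n : ℕ => |f (n + 1)|)) :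
    ∑' n : ℕ, (digitSum b (n + 1) : ℝ) *
        (f (n + 1) - ∑ j ∈ Finset.range b, f (b * (n + 1) + j)) =
    ∑ j ∈ Finset.Icc 1 (b - 1), (j : ℝ) * ∑' n : ℕ, f (b * n + j) :=
  stmt18_general b hb f h1
end
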